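/- arXiv:0712.3169 — 6 statements merged into one kernel-verified Lean document; each statement's English description precedes it below -/
import Mathlib

section
/- Control of the negative part of the entropy: let ψ : ℝ² → ℝ be measurable with e^ψ ∈ L¹(ℝ²) and ∫_{ℝ²} e^{ψ(x)} dx > 0, and let f : ℝ² → [0,∞) be measurable such that f·1_{{f≤1}} ∈ L¹(ℝ²) and f·|ψ|·1_{{f≤1}} ∈ L¹(ℝ²). Set m = ∫_{{f≤1}} f(x) dx and assume m > 0. Then ∫_{ℝ²} f(x) (log f(x))_− dx ≤ m log( (∫_{ℝ²} e^{ψ(x)} dx) / m ) − ∫_{{f≤1}} f(x) ψ(x) dx. -/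
/-!
Pointwise, Gibbs' inequality `t log (s / t) ≤ s - t` with `s = e^ψ / c` bounds `-f log f` by
`e^ψ / c - f + f log c - f ψ`. On `{f ≤ 1}` the left side is exactly `f (log f)_-`, and off it
`f (log f)_-` vanishes. Integrating over `{f ≤ 1}` with `c = (∫ e^ψ) / m` makes
`∫ e^ψ / c - ∫ f ≤ 0`, leaving `m log c - ∫ f ψ`.
-/

open MeasureTheory Real

namespace Real

theorem negMulLog_le_sub_sub_mul_log {t s : ℝ} (ht : 0 ≤ t) (hs : 0 < s) :
    negMulLog t ≤ s - t - t * log s := by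
  have h_quot := negMulLog_le_one_sub_self (div_nonneg ht hs.le)
  calc negMulLog t = negMulLog (t / s * s) := by rw [div_mul_cancel₀ t hs.ne']
    _ = s * negMulLog (t / s) + t / s * negMulLog s := negMulLog_mul _ _
    _ ≤ s * (1 - t / s) + t / s * negMulLog s := by gcongr
    _ = s - t - t * log s := by field_simp; simp only [negMulLog]; ring

theorem mul_max_neg_log_zero_eq_indicator {t : ℝ} (ht : 0 ≤ t) :
    t * max (-log t) 0 = {s : ℝ | s ≤ 1}.indicator negMulLog t := by
  by_cases h1 : t ≤ 1
  · rw [Set.indicator_of_mem (show t ∈ {s : ℝ | s ≤ 1} from h1),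
      max_eq_left (neg_nonneg.2 (log_nonpos ht h1)), negMulLog]
    ring
  · rw [Set.indicator_of_notMem (show t ∉ {s : ℝ | s ≤ 1} from h1),
      max_eq_right (neg_nonpos.2 (log_pos (not_le.1 h1)).le), mul_zero]

end Real

variable {α : Type*} [MeasurableSpace α] {μ : Measure α}

theorem lintegral_ofReal_mul_max_neg_log_eq {f : α → ℝ} (hf : Measurable f)
    (hf0 : ∀ x, 0 ≤ f x) :
    ∫⁻ x, ENNReal.ofReal (f x * max (-log (f x)) 0) ∂μ =
      ∫⁻ x in {x | f x ≤ 1}, ENNReal.ofReal (negMulLog (f x)) ∂μ := by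
  rw [← lintegral_indicator (measurableSet_le hf measurable_const)]
  refine lintegral_congr fun x => ?_
  rw [mul_max_neg_log_zero_eq_indicator (hf0 x)]
  by_cases h1 : f x ≤ 1 <;> simp [h1]

theorem lintegral_negMulLog_le_of_integral_exp_le {f ψ : α → ℝ} {K : ℝ}
    (hf : ∀ᵐ x ∂μ, f x ∈ Set.Icc 0 1) (hfi : Integrable f μ)
    (hfψ : Integrable (fun x => f x * ψ x) μ) (hψ : Integrable (fun x => exp (ψ x)) μ)
    (hK : ∫ x, exp (ψ x) ∂μ ≤ K) (hm : 0 < ∫ x, f x ∂μ) :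
    ∫⁻ x, ENNReal.ofReal (negMulLog (f x)) ∂μ ≤
      ENNReal.ofReal ((∫ x, f x ∂μ) * log (K / ∫ x, f x ∂μ) - ∫ x, f x * ψ x ∂μ) := by
  set m := ∫ x, f x ∂μ
  have : NeZero μ := ⟨by rintro rfl; simp [m] at hm⟩
  have hK0 : 0 < K := (integral_exp_pos hψ).trans_le hK
  set c := K / m
  have hc : 0 < c := div_pos hK0 hm
  set g : α → ℝ := fun x => exp (ψ x) / c + log c * f x - f x - f x * ψ x
  have hg₁ : Integrable (fun x => exp (ψ x) / c + log c * f x) μ :=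
    (hψ.div_const c).add (hfi.const_mul _)
  have hg₂ : Integrable (fun x => exp (ψ x) / c + log c * f x - f x) μ := hg₁.sub hfi
  have hg : Integrable g μ := hg₂.sub hfψ
  have hbound : ∀ᵐ x ∂μ, negMulLog (f x) ≤ g x := hf.mono fun x hx => by
    have := negMulLog_le_sub_sub_mul_log hx.1 (div_pos (exp_pos (ψ x)) hc)
    rw [log_div (exp_pos _).ne' hc.ne', log_exp] at this
    simp only [g]
    linarith
  have hint : ∫ x, g x ∂μ ≤ m * log c - ∫ x, f x * ψ x ∂μ := by
    have hexp : (∫ x, exp (ψ x) ∂μ) / c ≤ m := by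
      calc (∫ x, exp (ψ x) ∂μ) / c ≤ K / c := by gcongr
        _ = m := by simp only [c]; field_simp
    simp only [g]
    rw [integral_sub hg₂ hfψ, integral_sub hg₁ hfi,
      integral_add (hψ.div_const c) (hfi.const_mul _), integral_div, integral_const_mul]
    linarith
  have hg0 : 0 ≤ᵐ[μ] g := by
    filter_upwards [hf, hbound] with x hx hgx using (negMulLog_nonneg hx.1 hx.2).trans hgx
  calc ∫⁻ x, ENNReal.ofReal (negMulLog (f x)) ∂μ ≤ ∫⁻ x, ENNReal.ofReal (g x) ∂μ :=
        lintegral_mono_ae (hbound.mono fun x hx => ENNReal.ofReal_le_ofReal hx)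
    _ = ENNReal.ofReal (∫ x, g x ∂μ) :=
        (ofReal_integral_eq_lintegral_ofReal hg hg0).symm
    _ ≤ _ := ENNReal.ofReal_le_ofReal hint

theorem entropy_negative_part_control_general
    (ψ : EuclideanSpace ℝ (Fin 2) → ℝ) (hψm : Measurable ψ)
    (hψint : Integrable (fun x => Real.exp (ψ x)))
    (f : EuclideanSpace ℝ (Fin 2) → ℝ) (hf : Measurable f) (hf0 : ∀ x, 0 ≤ f x)
    (hf1 : IntegrableOn f {x | f x ≤ 1})
    (hfψ : IntegrableOn (fun x => f x * |ψ x|) {x | f x ≤ 1})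
    (hm : 0 < ∫ x in {x | f x ≤ 1}, f x) :
    (∫⁻ x, ENNReal.ofReal (f x * max (-Real.log (f x)) 0)) ≤
      ENNReal.ofReal ((∫ x in {x | f x ≤ 1}, f x) *
          Real.log ((∫ x, Real.exp (ψ x)) / ∫ x in {x | f x ≤ 1}, f x) -
        ∫ x in {x | f x ≤ 1}, f x * ψ x) := by
  have hS : MeasurableSet {x | f x ≤ 1} := measurableSet_le hf measurable_const
  have hfψ' : IntegrableOn (fun x => f x * ψ x) {x | f x ≤ 1} :=
    Integrable.mono hfψ (hf.mul hψm).aestronglyMeasurable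
      (Filter.Eventually.of_forall fun x => by simp)
  rw [lintegral_ofReal_mul_max_neg_log_eq hf hf0]
  exact lintegral_negMulLog_le_of_integral_exp_le
    ((ae_restrict_iff' hS).2 (Filter.Eventually.of_forall fun x hx => ⟨hf0 x, hx⟩)) hf1 hfψ'
    hψint.integrableOn
    (setIntegral_le_integral hψint (Filter.Eventually.of_forall fun x => (exp_pos _).le)) hm

/-- Control of the negative part of the entropy. -/
theorem entropy_negative_part_control
    (ψ : EuclideanSpace ℝ (Fin 2) → ℝ) (hψm : Measurable ψ)
    (hψint : Integrable (fun x => Real.exp (ψ x)))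
    (hψpos : 0 < ∫ x, Real.exp (ψ x))
    (f : EuclideanSpace ℝ (Fin 2) → ℝ) (hf : Measurable f) (hf0 : ∀ x, 0 ≤ f x)
    (hf1 : IntegrableOn f {x | f x ≤ 1})
    (hfψ : IntegrableOn (fun x => f x * |ψ x|) {x | f x ≤ 1})
    (hm : 0 < ∫ x in {x | f x ≤ 1}, f x) :
    (∫⁻ x, ENNReal.ofReal (f x * max (-Real.log (f x)) 0)) ≤
      ENNReal.ofReal ((∫ x in {x | f x ≤ 1}, f x) *
          Real.log ((∫ x, Real.exp (ψ x)) / ∫ x in {x | f x ≤ 1}, f x) -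
        ∫ x in {x | f x ≤ 1}, f x * ψ x) :=
  entropy_negative_part_control_general ψ hψm hψint f hf hf0 hf1 hfψ hm
end

section
/- Gradient of the Bessel kernel: for every α > 0 and every z ∈ ℝ² with z ≠ 0, the Bessel kernel B_α is differentiable at z and ∇B_α(z) = −(z/(8π)) ∫₀^∞ t^{-2} exp(−|z|²/(4t) − αt) dt = −(1/(2π)) (z/|z|²) g_α(z). -/
/-!
Write `B_α(z) = (4π)⁻¹ F(|z|²)` with `F(r) = ∫₀^∞ t⁻¹ exp(-r/(4t) - αt) dt`. Since
`t⁻ⁿ exp(-c/t) ≤ n!/cⁿ`, the `r`-derivative `-(1/4) t⁻² exp(-r/(4t) - αt)` of the integrand is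
dominated by a multiple of `exp(-αt)` uniformly for `r` near any `r₀ > 0`, so `F` may be
differentiated under the integral sign; the chain rule through `|z|²` gives the gradient. The
substitution `t = |z|²/(4s)` turns `∫ t⁻² exp(-|z|²/(4t) - αt) dt` into `(4/|z|²) g_α(z)`.
-/

open MeasureTheory Real

/-- The Bessel kernel `B_α` on `ℝ² \ {0}`. -/
noncomputable def besselKernel (α : ℝ) (z : EuclideanSpace ℝ (Fin 2)) : ℝ :=
  (1 / (4 * π)) * ∫ t in Set.Ioi (0 : ℝ), t⁻¹ * Real.exp (-‖z‖ ^ 2 / (4 * t) - α * t)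

/-- `g_α(z) = ∫₀^∞ exp(−s − α|z|²/(4s)) ds`. -/
noncomputable def gAlpha (α : ℝ) (z : EuclideanSpace ℝ (Fin 2)) : ℝ :=
  ∫ s in Set.Ioi (0 : ℝ), Real.exp (-s - α * ‖z‖ ^ 2 / (4 * s))

open Set
open scoped Nat

theorem integral_comp_const_div_Ioi {E : Type*} [NormedAddCommGroup E] [NormedSpace ℝ E]
    (g : ℝ → E) {c : ℝ} (hc : 0 < c) :
    ∫ s in Ioi 0, (c / s ^ 2) • g (c / s) = ∫ t in Ioi 0, g t := by
  have himage : (c / ·) '' Ioi 0 = Ioi (0 : ℝ) := by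
    ext t
    refine ⟨fun ⟨s, hs, hst⟩ => hst ▸ div_pos hc hs, fun ht => ⟨c / t, div_pos hc ht, ?_⟩⟩
    field_simp [(mem_Ioi.1 ht).ne']
  have hderiv (s : ℝ) (hs : s ∈ Ioi 0) : HasDerivWithinAt (c / ·) (-(c / s ^ 2)) (Ioi 0) s := by
    simpa [div_eq_mul_inv] using ((hasDerivAt_inv (mem_Ioi.1 hs).ne').const_mul c).hasDerivWithinAt
  have hinj : InjOn (c / ·) (Ioi (0 : ℝ)) := fun s _ t _ hst => by
    simpa [div_eq_mul_inv, hc.ne'] using hst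
  conv_rhs => rw [← himage, integral_image_eq_integral_abs_deriv_smul measurableSet_Ioi hderiv hinj]
  refine setIntegral_congr_fun measurableSet_Ioi fun s hs => ?_
  rw [abs_neg, abs_of_pos (div_pos hc (pow_pos (mem_Ioi.1 hs) 2))]

theorem inv_pow_mul_exp_neg_div_le {c t : ℝ} (hc : 0 < c) (ht : 0 < t) (n : ℕ) :
    (t ^ n)⁻¹ * exp (-(c / t)) ≤ n ! / c ^ n := by
  have h := Real.pow_div_factorial_le_exp _ (div_pos hc ht).le n
  rw [exp_neg, ← mul_inv, inv_le_comm₀ (by positivity) (by positivity), inv_div]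
  rw [div_pow, div_div, div_le_iff₀ (by positivity)] at h
  rw [div_le_iff₀ (by positivity)]
  nlinarith [h]

theorem HasDerivAt.hasGradientAt_comp_norm_sq {E : Type*} [NormedAddCommGroup E]
    [InnerProductSpace ℝ E] [CompleteSpace E] {f : ℝ → ℝ} {f' : ℝ} {x : E}
    (hf : HasDerivAt f f' (‖x‖ ^ 2)) :
    HasGradientAt (fun y => f (‖y‖ ^ 2)) ((2 * f') • x) x := by
  rw [hasGradientAt_iff_hasFDerivAt]
  refine (hf.comp_hasFDerivAt x (hasFDerivAt_id x).norm_sq).congr_fderiv ?_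
  ext v
  simp only [ContinuousLinearMap.comp_id, smul_apply, coe_innerSL_apply, nsmul_eq_mul, smul_eq_mul,
    map_smul, InnerProductSpace.toDual_apply_apply, id_eq]
  ring

section BesselProfile

variable {α : ℝ}

noncomputable def besselProfile (α r : ℝ) : ℝ :=
  ∫ t in Ioi 0, t⁻¹ * exp (-r / (4 * t) - α * t)

theorem besselKernel_eq_besselProfile :
    besselKernel α = fun z => 1 / (4 * π) * besselProfile α (‖z‖ ^ 2) := rfl

theorem hasDerivAt_besselProfile_integrand {t : ℝ} (ht : t ≠ 0) (x : ℝ) :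
    HasDerivAt (fun x => t⁻¹ * exp (-x / (4 * t) - α * t))
      (-(1 / 4) * ((t ^ 2)⁻¹ * exp (-x / (4 * t) - α * t))) x := by
  refine ((((hasDerivAt_id x).neg.div_const (4 * t)).sub_const (α * t)).exp.const_mul
    t⁻¹).congr_deriv ?_
  simp only [Pi.neg_apply, id_eq]
  field_simp

theorem inv_pow_mul_exp_le {c x t : ℝ} (hc : 0 < c) (hcx : c ≤ x) (ht : 0 < t) (n : ℕ) :
    (t ^ n)⁻¹ * exp (-x / (4 * t) - α * t) ≤ n ! * (4 / c) ^ n * exp (-α * t) := by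
  have hsplit : exp (-x / (4 * t) - α * t) = exp (-(x / 4 / t)) * exp (-α * t) := by
    rw [← exp_add]; ring_nf
  have hmono : exp (-(x / 4 / t)) ≤ exp (-(c / 4 / t)) := by gcongr
  calc (t ^ n)⁻¹ * exp (-x / (4 * t) - α * t)
      ≤ (t ^ n)⁻¹ * exp (-(c / 4 / t)) * exp (-α * t) := by
        rw [hsplit, ← mul_assoc]; gcongr
    _ ≤ n ! / (c / 4) ^ n * exp (-α * t) := by
        gcongr; exact inv_pow_mul_exp_neg_div_le (by positivity) ht n
    _ = n ! * (4 / c) ^ n * exp (-α * t) := by rw [div_eq_mul_inv, ← inv_pow, inv_div]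

theorem hasDerivAt_besselProfile (hα : 0 < α) {r : ℝ} (hr : 0 < r) :
    HasDerivAt (besselProfile α)
      (-(1 / 4) * ∫ t in Ioi 0, (t ^ 2)⁻¹ * exp (-r / (4 * t) - α * t)) r := by
  have hmeas (n : ℕ) (x : ℝ) : AEStronglyMeasurable
      (fun t : ℝ => (t ^ n)⁻¹ * exp (-x / (4 * t) - α * t)) (volume.restrict (Ioi 0)) := by
    fun_prop
  rw [← integral_const_mul]
  refine (hasDerivAt_integral_of_dominated_loc_of_deriv_le (μ := volume.restrict (Ioi 0))
    (F' := fun x t => -(1 / 4) * ((t ^ 2)⁻¹ * exp (-x / (4 * t) - α * t)))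
    (bound := fun t => 1 / 4 * (2 ! * (4 / (r / 2)) ^ 2 * exp (-α * t)))
    (Metric.ball_mem_nhds r (half_pos hr)) (.of_forall fun x => by simpa using hmeas 1 x)
    ?_ ((hmeas 2 r).const_mul _) ?_
    (((exp_neg_integrableOn_Ioi 0 hα).const_mul _).const_mul _) ?_).2
  · refine Integrable.mono' ((exp_neg_integrableOn_Ioi 0 hα).const_mul (1 ! * (4 / r) ^ 1))
      (by simpa using hmeas 1 r) ((ae_restrict_iff' measurableSet_Ioi).2 (.of_forall ?_))
    intro t (ht : 0 < t)
    rw [norm_of_nonneg (by positivity)]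
    simpa using inv_pow_mul_exp_le hr le_rfl ht 1
  · refine (ae_restrict_iff' measurableSet_Ioi).2 (.of_forall fun t (ht : 0 < t) x hx => ?_)
    have hrx : r / 2 ≤ x := by
      linarith [(abs_lt.1 (mem_ball_iff_norm.1 hx)).1]
    rw [norm_mul, norm_neg, norm_of_nonneg (by positivity : (0 : ℝ) ≤ 1 / 4),
      norm_of_nonneg (by positivity)]
    exact mul_le_mul_of_nonneg_left (inv_pow_mul_exp_le (half_pos hr) hrx ht 2) (by norm_num)
  · exact (ae_restrict_iff' measurableSet_Ioi).2 (.of_forall fun t ht x _ =>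
      hasDerivAt_besselProfile_integrand (mem_Ioi.1 ht).ne' x)

theorem integral_inv_sq_mul_exp_eq {r : ℝ} (hr : 0 < r) :
    ∫ t in Ioi 0, (t ^ 2)⁻¹ * exp (-r / (4 * t) - α * t) =
      4 / r * ∫ s in Ioi 0, exp (-s - α * r / (4 * s)) := by
  rw [← integral_comp_const_div_Ioi _ (div_pos hr four_pos), ← integral_const_mul]
  refine setIntegral_congr_fun measurableSet_Ioi fun s (hs : 0 < s) => ?_
  have hexp : -r / (4 * (r / 4 / s)) - α * (r / 4 / s) = -s - α * r / (4 * s) := by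
    field_simp
  simp only [smul_eq_mul, hexp]
  field_simp

end BesselProfile

/-- Gradient of the Bessel kernel away from the origin. -/
theorem bessel_gradient (α : ℝ) (hα : 0 < α)
    (z : EuclideanSpace ℝ (Fin 2)) (hz : z ≠ 0) :
    HasGradientAt (besselKernel α)
      ((-(1 / (8 * π)) *
          ∫ t in Set.Ioi (0 : ℝ), (t ^ 2)⁻¹ * Real.exp (-‖z‖ ^ 2 / (4 * t) - α * t)) • z)
      z ∧
    (-(1 / (8 * π)) *
        ∫ t in Set.Ioi (0 : ℝ), (t ^ 2)⁻¹ * Real.exp (-‖z‖ ^ 2 / (4 * t) - α * t)) • z =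
      (-(1 / (2 * π)) * (gAlpha α z / ‖z‖ ^ 2)) • z := by
  have hr : 0 < ‖z‖ ^ 2 := pow_pos (norm_pos_iff.2 hz) 2
  refine ⟨?_, ?_⟩
  · have h := ((hasDerivAt_besselProfile hα hr).const_mul (1 / (4 * π))).hasGradientAt_comp_norm_sq
    rw [besselKernel_eq_besselProfile]
    convert h using 2
    ring
  · rw [integral_inv_sq_mul_exp_eq hr, gAlpha]
    congr 1
    field_simp
    ring
end

section
/- ODE lower barrier: let T > 0, γ > 0, β > 1, C̄ > 0, and let f : [0,T] → ℝ be continuous with f(t) ≥ C̄ for all t ∈ [0,T]. Let Z : [0,T] → ℝ be differentiable with Z(t) > 0 for all t, satisfying Z'(t) = −γ Z(t)^β + f(t) Z(t) + f(t) on [0,T] and Z(0) ≥ (C̄/γ)^{1/(β−1)}. Then Z(t) ≥ (C̄/γ)^{1/(β−1)} for every t ∈ [0,T]. -/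
open Real Set

theorem le_of_hasDerivWithinAt_pos_of_eq {Z Z' : ℝ → ℝ} {a b M : ℝ}
    (hZ : ∀ t ∈ Icc a b, HasDerivWithinAt Z (Z' t) (Icc a b) t) (ha : M ≤ Z a)
    (hlevel : ∀ t ∈ Ico a b, Z t = M → 0 < Z' t) :
    ∀ t ∈ Icc a b, M ≤ Z t := by
  have hneg : ∀ ⦃t⦄, t ∈ Icc a b → -Z t ≤ -M :=
    image_le_of_deriv_right_lt_deriv_boundary' (f' := fun t => -Z' t) (B' := fun _ => 0)
      (fun t ht => (hZ t ht).continuousWithinAt.neg)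
      (fun t ht => ((hZ t (Ico_subset_Icc_self ht)).mono_of_mem_nhdsWithin
        (Icc_mem_nhdsGE_of_mem ht)).neg)
      (neg_le_neg ha) continuousOn_const (fun _ _ => hasDerivWithinAt_const _ _ _)
      (fun t ht hZt => neg_neg_of_pos (hlevel t ht (neg_injective hZt)))
  exact fun t ht => neg_le_neg_iff.mp (hneg ht)

theorem rpow_one_div_sub_one_rpow {x β : ℝ} (hx : 0 < x) (hβ : β ≠ 1) :
    (x ^ (1 / (β - 1))) ^ β = x * x ^ (1 / (β - 1)) := by
  have hβ' : β - 1 ≠ 0 := sub_ne_zero.mpr hβ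
  rw [← rpow_mul hx.le, show 1 / (β - 1) * β = 1 + 1 / (β - 1) by field_simp; ring,
    rpow_add hx, rpow_one]

theorem ode_lower_barrier_general (T γ β Cb : ℝ) (hγ : 0 < γ) (hβ : 1 < β)
    (hCb : 0 < Cb)
    (f : ℝ → ℝ)
    (hfC : ∀ t ∈ Set.Icc (0 : ℝ) T, Cb ≤ f t)
    (Z : ℝ → ℝ)
    (hZ : ∀ t ∈ Set.Icc (0 : ℝ) T,
      HasDerivWithinAt Z (-γ * Z t ^ β + f t * Z t + f t) (Set.Icc 0 T) t)
    (hZ0 : (Cb / γ) ^ (1 / (β - 1)) ≤ Z 0) :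
    ∀ t ∈ Set.Icc (0 : ℝ) T, (Cb / γ) ^ (1 / (β - 1)) ≤ Z t := by
  set M := (Cb / γ) ^ (1 / (β - 1))
  have hM : 0 < M := by positivity
  -- `M` is the equilibrium of `Z' = -γ Z^β + Cb Z`, so at `Z t = M` the derivative is
  -- `(f t - Cb) M + f t ≥ f t > 0`.
  have hγM : γ * M ^ β = Cb * M := by
    rw [rpow_one_div_sub_one_rpow (div_pos hCb hγ) hβ.ne', ← mul_assoc, mul_div_cancel₀ _ hγ.ne']
  refine le_of_hasDerivWithinAt_pos_of_eq hZ hZ0 fun t ht hZt => ?_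
  have hft := hfC t (Ico_subset_Icc_self ht)
  rw [hZt]
  nlinarith

/-- ODE lower barrier. -/
theorem ode_lower_barrier (T γ β Cb : ℝ) (hT : 0 < T) (hγ : 0 < γ) (hβ : 1 < β)
    (hCb : 0 < Cb)
    (f : ℝ → ℝ) (hf : ContinuousOn f (Set.Icc 0 T))
    (hfC : ∀ t ∈ Set.Icc (0 : ℝ) T, Cb ≤ f t)
    (Z : ℝ → ℝ) (hZpos : ∀ t ∈ Set.Icc (0 : ℝ) T, 0 < Z t)
    (hZ : ∀ t ∈ Set.Icc (0 : ℝ) T,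
      HasDerivWithinAt Z (-γ * Z t ^ β + f t * Z t + f t) (Set.Icc 0 T) t)
    (hZ0 : (Cb / γ) ^ (1 / (β - 1)) ≤ Z 0) :
    ∀ t ∈ Set.Icc (0 : ℝ) T, (Cb / γ) ^ (1 / (β - 1)) ≤ Z t :=
  ode_lower_barrier_general T γ β Cb hγ hβ hCb f hfC Z hZ hZ0
end

section
/- ODE decay estimate independent of the initial value: let T > 0, γ > 0, β > 1, C̄ > 0, F > 0, and let f : [0,T] → ℝ be continuous with C̄ ≤ f(t) for all t and ∫₀^T f(s) ds ≤ F. Let Z : [0,T] → ℝ be differentiable with Z(t) > 0 for all t, satisfying Z'(t) = −γ Z(t)^β + f(t) Z(t) + f(t) on [0,T] and Z(0) ≥ (C̄/γ)^{1/(β−1)}. Then there exists a constant C depending only on γ, β, C̄ and F (and not on Z(0) or T) such that Z(t) ≤ C · t^{−1/(β−1)} for every t ∈ (0,T]; explicitly one may take C = (γ(β−1))^{−1/(β−1)} · exp( (1 + (γ/C̄)^{1/(β−1)}) F ). -/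
/-!
The level `c = (C̄/γ)^{1/(β-1)}` is a barrier: where `Z = c` the equation gives
`Z' = c (f - C̄) + f > 0`, so `Z ≥ c` throughout. Substituting `V = Z^{1-β}` and using
`Z^{-β} ≤ Z^{1-β}/c` turns the equation into the linear differential inequality
`V' ≥ γ(β-1) - K f V` with `K = (β-1)(1 + 1/c)`. An integrating factor then gives
`V(t) e^{K ∫₀ᵗ f} ≥ V(0) + γ(β-1) t > γ(β-1) t`, and inverting the power yields the bound,
in which `Z(0)` has disappeared.
-/

open Real Set

theorem le_image_of_deriv_pos_of_image_eq {Z Z' : ℝ → ℝ} {a b c : ℝ}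
    (hZ : ∀ x ∈ Icc a b, HasDerivWithinAt Z (Z' x) (Icc a b) x) (ha : c ≤ Z a)
    (hc : ∀ x ∈ Ico a b, Z x = c → 0 < Z' x) :
    ∀ x ∈ Icc a b, c ≤ Z x := by
  have hright : ∀ x ∈ Ico a b, HasDerivWithinAt (fun y => -Z y) (-Z' x) (Ici x) x := fun x hx =>
    ((hZ x (Ico_subset_Icc_self hx)).mono_of_mem_nhdsWithin
      (Filter.mem_of_superset (Icc_mem_nhdsGE hx.2) (Icc_subset_Icc_left hx.1))).neg
  intro x hx
  simpa using image_le_of_deriv_right_lt_deriv_boundary (B := fun _ => -c) (B' := fun _ => 0)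
    (fun y hy => (hZ y hy).continuousWithinAt.neg) hright (neg_le_neg ha)
    (fun _ => hasDerivAt_const _ _) (fun y hy hyc => neg_neg_iff_pos.2 (hc y hy (neg_inj.1 hyc))) hx

theorem add_mul_sub_le_mul_exp_integral_of_le_deriv {V V' k : ℝ → ℝ} {a b r : ℝ}
    (hV : ∀ x ∈ Icc a b, HasDerivWithinAt V (V' x) (Icc a b) x)
    (hk : ContinuousOn k (Icc a b)) (hk0 : ∀ x ∈ Icc a b, 0 ≤ k x) (hr : 0 ≤ r)
    (hV' : ∀ x ∈ Ioo a b, r - k x * V x ≤ V' x) :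
    ∀ t ∈ Icc a b, V a + r * (t - a) ≤ V t * exp (∫ s in a..t, k s) := by
  rcases lt_or_ge b a with hba | hab
  · simp [Icc_eq_empty_of_lt hba]
  set K : ℝ → ℝ := fun u => ∫ s in a..u, k s
  have hK0 : ∀ x ∈ Icc a b, 0 ≤ K x := fun x hx =>
    intervalIntegral.integral_nonneg hx.1 fun y hy => hk0 y ⟨hy.1, hy.2.trans hx.2⟩
  have hKcont : ContinuousOn K (Icc a b) := by
    rw [← uIcc_of_le hab] at hk ⊢
    exact intervalIntegral.continuousOn_primitive_interval hk.integrableOn_Icc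
  have hK' : ∀ x ∈ Ioo a b, HasDerivAt K (k x) x := fun x hx =>
    intervalIntegral.integral_hasDerivAt_right
      (hk.mono (uIcc_subset_Icc (left_mem_Icc.2 hab) (Ioo_subset_Icc_self hx))).intervalIntegrable
      ((hk.mono Ioo_subset_Icc_self).stronglyMeasurableAtFilter isOpen_Ioo x hx)
      (hk.continuousAt (Icc_mem_nhds hx.1 hx.2))
  have hVcont : ContinuousOn V (Icc a b) := fun x hx => (hV x hx).continuousWithinAt
  have hmono : MonotoneOn (fun u => V u * exp (K u) - r * u) (Icc a b) := by
    refine monotoneOn_of_hasDerivWithinAt_nonneg (convex_Icc a b)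
      ((hVcont.mul hKcont.rexp).sub (continuousOn_const.mul continuousOn_id))
      (f' := fun x => V' x * exp (K x) + V x * (exp (K x) * k x) - r * 1) ?_ ?_ <;>
      rw [interior_Icc] <;> intro x hx
    · have hVx := (hV x (Ioo_subset_Icc_self hx)).hasDerivAt (Icc_mem_nhds hx.1 hx.2)
      exact ((hVx.mul (hK' x hx).exp).sub ((hasDerivAt_id x).const_mul r)).hasDerivWithinAt
    · have h1 : 1 ≤ exp (K x) := one_le_exp (hK0 x (Ioo_subset_Icc_self hx))
      have := hV' x hx
      nlinarith
  intro t ht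
  have := hmono (left_mem_Icc.2 hab) ht ht.1
  simp only [K, intervalIntegral.integral_same, exp_zero] at this
  linarith

theorem rpow_inv_sub_one_rpow {y β : ℝ} (hy : 0 < y) (hβ : β ≠ 1) :
    (y ^ (1 / (β - 1))) ^ β = y * y ^ (1 / (β - 1)) := by
  have : β - 1 ≠ 0 := sub_ne_zero.2 hβ
  rw [← rpow_mul hy.le, show 1 / (β - 1) * β = 1 + 1 / (β - 1) by field_simp; ring,
    rpow_add hy, rpow_one]

theorem sub_mul_rpow_one_sub_le_riccati_mul_rpow {β γ φ c z : ℝ} (hβ : 1 ≤ β) (hc : 0 < c)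
    (hcz : c ≤ z) (hφ : 0 ≤ φ) :
    γ * (β - 1) - (β - 1) * (1 + c⁻¹) * φ * z ^ (1 - β) ≤
      (-γ * z ^ β + φ * z + φ) * (1 - β) * z ^ (1 - β - 1) := by
  have hz : 0 < z := hc.trans_le hcz
  set w := z ^ (-β)
  have hw : 0 < w := rpow_pos_of_pos hz _
  have hzw : z ^ β * w = 1 := by rw [← rpow_add hz]; simp
  have hz1 : z ^ (1 - β) = z * w := by rw [sub_eq_add_neg, rpow_add hz, rpow_one]
  rw [show 1 - β - 1 = -β by ring, hz1]
  have hzc : 1 ≤ z * c⁻¹ := by rw [← div_eq_mul_inv, one_le_div hc]; exact hcz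
  have key : 0 ≤ (β - 1) * φ * w * (z * c⁻¹ - 1) :=
    mul_nonneg (by positivity) (by linarith)
  linear_combination key - (β - 1) * γ * hzw

theorem le_rpow_mul_exp_mul_rpow_of_mul_le {β r t z a : ℝ} (hβ : 1 < β) (hz : 0 < z)
    (hr : 0 < r) (ht : 0 < t) (h : r * t ≤ z ^ (1 - β) * exp a) :
    z ≤ r ^ (-(1 / (β - 1))) * exp (a / (β - 1)) * t ^ (-(1 / (β - 1))) := by
  have hβ1 : β - 1 ≠ 0 := by linarith
  have hrt : r * t * exp (-a) ≤ z ^ (1 - β) := by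
    calc r * t * exp (-a) ≤ z ^ (1 - β) * exp a * exp (-a) :=
          mul_le_mul_of_nonneg_right h (exp_pos _).le
      _ = z ^ (1 - β) := by rw [mul_assoc, ← exp_add, add_neg_cancel, exp_zero, mul_one]
  calc z = (z ^ (1 - β)) ^ (-(1 / (β - 1))) := by
        rw [← rpow_mul hz.le, show (1 - β) * -(1 / (β - 1)) = 1 by field_simp; ring, rpow_one]
    _ ≤ (r * t * exp (-a)) ^ (-(1 / (β - 1))) :=
        rpow_le_rpow_of_nonpos (by positivity) hrt (neg_nonpos.2 (one_div_nonneg.2 (by linarith)))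
    _ = r ^ (-(1 / (β - 1))) * exp (a / (β - 1)) * t ^ (-(1 / (β - 1))) := by
        rw [mul_rpow (by positivity) (exp_pos _).le, mul_rpow hr.le ht.le, ← exp_mul]
        ring_nf

section Riccati

variable {T γ β Cb : ℝ} {f Z : ℝ → ℝ}

theorem riccati_barrier_le (hγ : 0 < γ) (hβ : 1 < β) (hCb : 0 < Cb)
    (hfC : ∀ t ∈ Icc 0 T, Cb ≤ f t)
    (hZ : ∀ t ∈ Icc 0 T, HasDerivWithinAt Z (-γ * Z t ^ β + f t * Z t + f t) (Icc 0 T) t)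
    (hZ0 : (Cb / γ) ^ (1 / (β - 1)) ≤ Z 0) :
    ∀ t ∈ Icc 0 T, (Cb / γ) ^ (1 / (β - 1)) ≤ Z t := by
  set c := (Cb / γ) ^ (1 / (β - 1))
  have hc : 0 < c := by positivity
  refine le_image_of_deriv_pos_of_image_eq hZ hZ0 fun x hx hZx => ?_
  have hcβ : γ * c ^ β = Cb * c := by
    rw [show c ^ β = Cb / γ * c from rpow_inv_sub_one_rpow (div_pos hCb hγ) hβ.ne']
    field_simp
  have := hfC x (Ico_subset_Icc_self hx)
  rw [hZx]
  nlinarith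

theorem riccati_mul_le_rpow_one_sub_mul_exp (hγ : 0 < γ) (hβ : 1 < β) (hCb : 0 < Cb)
    (hf : ContinuousOn f (Icc 0 T)) (hfC : ∀ t ∈ Icc 0 T, Cb ≤ f t)
    (hZpos : ∀ t ∈ Icc 0 T, 0 < Z t)
    (hZ : ∀ t ∈ Icc 0 T, HasDerivWithinAt Z (-γ * Z t ^ β + f t * Z t + f t) (Icc 0 T) t)
    (hZ0 : (Cb / γ) ^ (1 / (β - 1)) ≤ Z 0) {t : ℝ} (ht : t ∈ Icc 0 T) :
    γ * (β - 1) * t ≤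
      Z t ^ (1 - β) * exp ((β - 1) * (1 + (γ / Cb) ^ (1 / (β - 1))) * ∫ s in 0..t, f s) := by
  set c := (Cb / γ) ^ (1 / (β - 1))
  have hc : 0 < c := by positivity
  have hcinv : (γ / Cb) ^ (1 / (β - 1)) = c⁻¹ := by
    rw [← inv_rpow (div_pos hCb hγ).le, inv_div]
  rw [hcinv, ← intervalIntegral.integral_const_mul]
  have hβ1 : 0 < β - 1 := by linarith
  have hf0 : ∀ x ∈ Icc 0 T, 0 ≤ f x := fun x hx => hCb.le.trans (hfC x hx)
  have hlow := riccati_barrier_le hγ hβ hCb hfC hZ hZ0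
  have hgrowth := add_mul_sub_le_mul_exp_integral_of_le_deriv (r := γ * (β - 1))
    (k := fun s => (β - 1) * (1 + c⁻¹) * f s)
    (fun x hx => (hZ x hx).rpow_const (p := 1 - β) (Or.inl (hZpos x hx).ne'))
    (continuousOn_const.mul hf) (fun x hx => mul_nonneg (by positivity) (hf0 x hx))
    (by positivity)
    (fun x hx => sub_mul_rpow_one_sub_le_riccati_mul_rpow hβ.le hc
      (hlow x (Ioo_subset_Icc_self hx)) (hf0 x (Ioo_subset_Icc_self hx))) t ht
  have h0 : 0 < Z 0 ^ (1 - β) := rpow_pos_of_pos (hZpos 0 ⟨le_rfl, ht.1.trans ht.2⟩) _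
  linarith

end Riccati

theorem ode_decay_estimate_general (T γ β Cb F : ℝ) (hγ : 0 < γ) (hβ : 1 < β)
    (hCb : 0 < Cb)
    (f : ℝ → ℝ) (hf : ContinuousOn f (Set.Icc 0 T))
    (hfC : ∀ t ∈ Set.Icc (0 : ℝ) T, Cb ≤ f t)
    (hfF : (∫ s in (0 : ℝ)..T, f s) ≤ F)
    (Z : ℝ → ℝ) (hZpos : ∀ t ∈ Set.Icc (0 : ℝ) T, 0 < Z t)
    (hZ : ∀ t ∈ Set.Icc (0 : ℝ) T,
      HasDerivWithinAt Z (-γ * Z t ^ β + f t * Z t + f t) (Set.Icc 0 T) t)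
    (hZ0 : (Cb / γ) ^ (1 / (β - 1)) ≤ Z 0) :
    ∀ t ∈ Set.Ioc (0 : ℝ) T,
      Z t ≤ ((γ * (β - 1)) ^ (-(1 / (β - 1))) *
          Real.exp ((1 + (γ / Cb) ^ (1 / (β - 1))) * F)) * t ^ (-(1 / (β - 1))) := by
  intro t ⟨ht0, htT⟩
  have hβ1 : 0 < β - 1 := by linarith
  have hint : ∫ s in (0 : ℝ)..t, f s ≤ F :=
    (intervalIntegral.integral_mono_interval le_rfl ht0.le htT
      ((MeasureTheory.ae_restrict_iff' measurableSet_Ioc).2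
        (.of_forall fun x hx => hCb.le.trans (hfC x (Ioc_subset_Icc_self hx))))
      (hf.intervalIntegrable_of_Icc (ht0.le.trans htT))).trans hfF
  have hZt : 0 < Z t := hZpos t ⟨ht0.le, htT⟩
  have hgrowth := riccati_mul_le_rpow_one_sub_mul_exp hγ hβ hCb hf hfC hZpos hZ hZ0 ⟨ht0.le, htT⟩
  have hgrowthF : γ * (β - 1) * t ≤
      Z t ^ (1 - β) * exp ((β - 1) * (1 + (γ / Cb) ^ (1 / (β - 1))) * F) :=
    hgrowth.trans (by gcongr)
  convert le_rpow_mul_exp_mul_rpow_of_mul_le hβ hZt (by positivity) ht0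
    hgrowthF using 3
  field_simp

/-- ODE decay estimate independent of the initial value, with the explicit constant
`C = (γ(β−1))^{−1/(β−1)} · exp( (1 + (γ/C̄)^{1/(β−1)}) F )`. -/
theorem ode_decay_estimate (T γ β Cb F : ℝ) (hT : 0 < T) (hγ : 0 < γ) (hβ : 1 < β)
    (hCb : 0 < Cb) (hF : 0 < F)
    (f : ℝ → ℝ) (hf : ContinuousOn f (Set.Icc 0 T))
    (hfC : ∀ t ∈ Set.Icc (0 : ℝ) T, Cb ≤ f t)
    (hfF : (∫ s in (0 : ℝ)..T, f s) ≤ F)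
    (Z : ℝ → ℝ) (hZpos : ∀ t ∈ Set.Icc (0 : ℝ) T, 0 < Z t)
    (hZ : ∀ t ∈ Set.Icc (0 : ℝ) T,
      HasDerivWithinAt Z (-γ * Z t ^ β + f t * Z t + f t) (Set.Icc 0 T) t)
    (hZ0 : (Cb / γ) ^ (1 / (β - 1)) ≤ Z 0) :
    ∀ t ∈ Set.Ioc (0 : ℝ) T,
      Z t ≤ ((γ * (β - 1)) ^ (-(1 / (β - 1))) *
          Real.exp ((1 + (γ / Cb) ^ (1 / (β - 1))) * F)) * t ^ (-(1 / (β - 1))) :=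
  ode_decay_estimate_general T γ β Cb F hγ hβ hCb f hf hfC hfF Z hZpos hZ hZ0
end

section
/- Integral-inequality comparison lemma: let T > 0, let f : ℝ → ℝ be continuous and nondecreasing, and let I : [0,T] → ℝ be continuous and satisfy I(t) ≤ I(0) + ∫₀^t f(I(s)) ds for every t ∈ [0,T]. If f(I(0)) < 0, then I(t) ≤ I(0) + t · f(I(0)) for every t ∈ [0,T]. -/
/-!
Continuous induction shows that `I` never exceeds `I 0`: while `I ≤ I 0` on `[0, t]`,
monotonicity gives `f ∘ I ≤ f (I 0) < 0` there, and by continuity `f ∘ I` stays negative a little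
beyond `t`, so the integral inequality keeps `I ≤ I 0` a little longer. Once `I ≤ I 0` on all of
`[0, T]`, integrating `f (I s) ≤ f (I 0)` gives the bound.
-/

open Set Filter Topology

lemma intervalIntegral_nonpos_of_forall_mem_Icc {g : ℝ → ℝ} {a b : ℝ} (hab : a ≤ b)
    (hg : ∀ u ∈ Icc a b, g u ≤ 0) : ∫ u in a..b, g u ≤ 0 := by
  simpa using intervalIntegral.integral_nonneg (f := fun u ↦ -g u) hab
    fun u hu ↦ neg_nonneg.2 (hg u hu)

lemma le_const_of_le_const_add_integral {I g : ℝ → ℝ} {a b c : ℝ} (hab : a ≤ b)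
    (hI : ContinuousOn I (Icc a b)) (hg : ContinuousOn g (Icc a b))
    (hineq : ∀ t ∈ Icc a b, I t ≤ c + ∫ s in a..t, g s)
    (hneg : ∀ t ∈ Icc a b, I t ≤ c → g t < 0) :
    ∀ t ∈ Icc a b, I t ≤ c := by
  have hclosed : IsClosed ({t | I t ≤ c} ∩ Icc a b) := by
    rw [inter_comm]
    exact hI.preimage_isClosed_of_isClosed isClosed_Icc isClosed_Iic
  have ha : I a ≤ c := by simpa using hineq a (left_mem_Icc.2 hab)
  refine hclosed.Icc_subset_of_forall_mem_nhdsGT_of_Icc_subset ha fun t ht hbelow ↦ ?_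
  have htIcc : t ∈ Icc a b := Ico_subset_Icc_self ht
  have hnear : ∀ᶠ u in 𝓝[Icc t b] t, g u < 0 :=
    ((hg t htIcc).mono (Icc_subset_Icc_left ht.1)).eventually_lt_const
      (hneg t htIcc (hbelow ⟨ht.1, le_rfl⟩))
  rw [nhdsWithin_Icc_eq_nhdsGE ht.2] at hnear
  obtain ⟨m, hm, hneg_right⟩ := (mem_nhdsGE_iff_exists_Ico_subset' ht.2).1 hnear
  filter_upwards [Ioo_mem_nhdsGT (lt_min hm ht.2)] with r ⟨htr, hr⟩
  have hrIcc : r ∈ Icc a b := ⟨ht.1.trans htr.le, hr.le.trans (min_le_right _ _)⟩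
  refine (hineq r hrIcc).trans (add_le_of_nonpos_right ?_)
  refine intervalIntegral_nonpos_of_forall_mem_Icc hrIcc.1 fun u hu ↦ le_of_lt ?_
  rcases le_or_gt u t with hut | htu
  · exact hneg u ⟨hu.1, hut.trans htIcc.2⟩ (hbelow ⟨hu.1, hut⟩)
  · exact hneg_right ⟨htu.le, hu.2.trans_lt (hr.trans_le (min_le_left _ _))⟩

/-- Integral-inequality comparison lemma. -/
theorem integral_comparison_lemma (T : ℝ) (hT : 0 < T)
    (f : ℝ → ℝ) (hfcont : Continuous f) (hfmono : Monotone f)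
    (I : ℝ → ℝ) (hI : ContinuousOn I (Set.Icc 0 T))
    (hineq : ∀ t ∈ Set.Icc (0 : ℝ) T, I t ≤ I 0 + ∫ s in (0 : ℝ)..t, f (I s))
    (hf0 : f (I 0) < 0) :
    ∀ t ∈ Set.Icc (0 : ℝ) T, I t ≤ I 0 + t * f (I 0) := by
  have hfI : ContinuousOn (fun s ↦ f (I s)) (Icc 0 T) := hfcont.comp_continuousOn hI
  have hbelow : ∀ t ∈ Icc 0 T, I t ≤ I 0 :=
    le_const_of_le_const_add_integral hT.le hI hfI hineq
      fun t _ ht ↦ (hfmono ht).trans_lt hf0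
  intro t ht
  calc I t ≤ I 0 + ∫ s in (0 : ℝ)..t, f (I s) := hineq t ht
    _ ≤ I 0 + ∫ _ in (0 : ℝ)..t, f (I 0) := by
      gcongr
      refine intervalIntegral.integral_mono_on ht.1
        ((hfI.mono (Icc_subset_Icc_right ht.2)).intervalIntegrable_of_Icc ht.1)
        intervalIntegrable_const fun s hs ↦ hfmono (hbelow s ⟨hs.1, hs.2.trans ht.2⟩)
    _ = I 0 + t * f (I 0) := by simp
end

section
/- Logarithmic moment estimate: let T > 0, let c : ℝ² × [0,T] → ℝ be smooth, and let n : ℝ² × [0,T] → (0,∞) be smooth, satisfying pointwise ∂ₜ n = Δn − ∇·(n ∇c) on ℝ² × (0,T), with ∫_{ℝ²} n(x,t) dx = M for all t. Assume that, uniformly in t ∈ [0,T], the functions n, ∇n, ∂ₜn, n∇c and n|∇(log n − c)|² decay faster than any power of |x| as |x| → ∞. Then for every δ > 0 and every t ∈ [0,T]: ∫_{ℝ²} n(x,t) log(1+|x|²) dx ≤ ∫_{ℝ²} n(x,0) log(1+|x|²) dx + (M/(2δ)) t + (δ/2) ∫₀^t ∫_{ℝ²} n(x,s) |∇( log n(x,s)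 − c(x,s) )|² dx ds. -/
open MeasureTheory Real Set

/-- Spatial partial derivative in the `i`-th coordinate direction. -/
noncomputable def pderiv2 (i : Fin 2) (u : EuclideanSpace ℝ (Fin 2) → ℝ)
    (x : EuclideanSpace ℝ (Fin 2)) : ℝ :=
  fderiv ℝ u x (EuclideanSpace.single i 1)

namespace LogMoment

noncomputable abbrev E2 := EuclideanSpace ℝ (Fin 2)

noncomputable def Phi : E2 ≃L[ℝ] ℝ × ℝ :=
  (EuclideanSpace.equiv (Fin 2) ℝ).trans (ContinuousLinearEquiv.finTwoArrow ℝ ℝ)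

noncomputable def PhiM : E2 ≃ᵐ (ℝ × ℝ) :=
  (MeasurableEquiv.toLp 2 (Fin 2 → ℝ)).symm.trans (MeasurableEquiv.finTwoArrow)

lemma phiM_symm_eq : ⇑PhiM.symm = ⇑Phi.symm := rfl

lemma measurePreserving_PhiM : MeasurePreserving (⇑PhiM) (volume : Measure E2) volume :=
  (volume_preserving_finTwoArrow ℝ).comp (EuclideanSpace.volume_preserving_symm_measurableEquiv_toLp (Fin 2))

lemma Phi_symm_one_zero : Phi.symm (1, 0) = EuclideanSpace.single 0 (1:ℝ) := by
  apply PiLp.ext; intro i; fin_cases i <;> simp [Phi, EuclideanSpace.single_apply]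

lemma Phi_symm_zero_one : Phi.symm (0, 1) = EuclideanSpace.single 1 (1:ℝ) := by
  apply PiLp.ext; intro i; fin_cases i <;> simp [Phi, EuclideanSpace.single_apply]

lemma coord_abs_le (x : E2) (i : Fin 2) : |x i| ≤ ‖x‖ := by
  have h := abs_real_inner_le_norm (EuclideanSpace.single i (1:ℝ)) x
  simpa [EuclideanSpace.inner_single_left, EuclideanSpace.norm_single] using h

lemma integrable_onePlus_rpow {r : ℝ} (hr : 2 < r) :
    Integrable (fun x : E2 => (1 + ‖x‖) ^ (-r)) := by
  apply integrable_one_add_norm (E := E2)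
  simpa [finrank_euclideanSpace] using hr

lemma rpow_neg3_antitone {a b : ℝ} (ha : 0 < a) (hab : a ≤ b) :
    b ^ (-3:ℝ) ≤ a ^ (-3:ℝ) := by
  have hb : 0 < b := lt_of_lt_of_le ha hab
  rw [Real.rpow_neg ha.le, Real.rpow_neg hb.le]
  exact inv_anti₀ (Real.rpow_pos_of_pos ha _) (Real.rpow_le_rpow ha.le hab (by norm_num))

lemma pderiv2_contDiff {w : E2 → ℝ} (hw : ContDiff ℝ (⊤ : ℕ∞) w) (i : Fin 2) :
    ContDiff ℝ (⊤ : ℕ∞) (pderiv2 i w) := by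
  have h : ContDiff ℝ (⊤ : ℕ∞) (fderiv ℝ w) := hw.fderiv_right (by simp)
  exact h.clm_apply contDiff_const

lemma abs4 {a b c d B : ℝ} (ha : ‖a‖ ≤ B) (hb : ‖b‖ ≤ B) (hc : ‖c‖ ≤ B)
    (hd : ‖d‖ ≤ B) : ‖a - b + c - d‖ ≤ 4 * B := by
  simp only [Real.norm_eq_abs, abs_le] at *
  exact ⟨by linarith [ha.1, hb.1, hc.1, hd.1, ha.2, hb.2, hc.2, hd.2],
    by linarith [ha.1, hb.1, hc.1, hd.1, ha.2, hb.2, hc.2, hd.2]⟩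

/-- Whole-plane divergence theorem for rapidly decaying C^∞ vector fields. -/
lemma div_eq_zero (w₀ w₁ : E2 → ℝ)
    (h₀ : ContDiff ℝ (⊤ : ℕ∞) w₀) (h₁ : ContDiff ℝ (⊤ : ℕ∞) w₁) (C : ℝ)
    (hd₀ : ∀ x, |w₀ x| ≤ C * (1 + ‖x‖) ^ (-3 : ℝ))
    (hd₁ : ∀ x, |w₁ x| ≤ C * (1 + ‖x‖) ^ (-3 : ℝ))
    (hint : Integrable (fun x => pderiv2 0 w₀ x + pderiv2 1 w₁ x)) :
    ∫ x, (pderiv2 0 w₀ x + pderiv2 1 w₁ x) = 0 := by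
  have hC0 : 0 ≤ C := by
    have := (abs_nonneg (w₀ 0)).trans (hd₀ 0)
    simpa using this
  set dv : E2 → ℝ := fun x => pderiv2 0 w₀ x + pderiv2 1 w₁ x with hdv
  set f : ℝ × ℝ → ℝ := fun p => w₀ (Phi.symm p) with hf
  set g : ℝ × ℝ → ℝ := fun p => w₁ (Phi.symm p) with hg
  set f' : ℝ × ℝ → (ℝ × ℝ) →L[ℝ] ℝ :=
    fun p => (fderiv ℝ w₀ (Phi.symm p)).comp (Phi.symm : (ℝ×ℝ) →L[ℝ] E2) with hf'
  set g' : ℝ × ℝ → (ℝ × ℝ) →L[ℝ] ℝ :=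
    fun p => (fderiv ℝ w₁ (Phi.symm p)).comp (Phi.symm : (ℝ×ℝ) →L[ℝ] E2) with hg'
  have hdf : ∀ p, HasFDerivAt f (f' p) p := fun p =>
    ((h₀.differentiable (by simp) (Phi.symm p)).hasFDerivAt).comp p (Phi.symm.hasFDerivAt)
  have hdg : ∀ p, HasFDerivAt g (g' p) p := fun p =>
    ((h₁.differentiable (by simp) (Phi.symm p)).hasFDerivAt).comp p (Phi.symm.hasFDerivAt)
  have e : (fun p => f' p (1, 0) + g' p (0, 1)) = fun p => dv (Phi.symm p) := by
    funext p
    simp only [hf', hg', ContinuousLinearMap.comp_apply, ContinuousLinearEquiv.coe_coe, hdv,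
      pderiv2]
    rw [Phi_symm_one_zero, Phi_symm_zero_one]
  have hIntp : Integrable (fun p => dv (Phi.symm p)) := by
    rw [← phiM_symm_eq]
    exact ((measurePreserving_PhiM.symm _).integrable_comp_emb
      (PhiM.symm.measurableEmbedding)).2 hint
  have hEq : (∫ p, dv (Phi.symm p)) = ∫ x, dv x := by
    rw [← phiM_symm_eq]
    exact MeasurePreserving.integral_comp (measurePreserving_PhiM.symm _)
      (PhiM.symm.measurableEmbedding) dv
  -- boxes
  set R : ℕ → ℝ := fun k => (k : ℝ) + 1 with hR
  have hRpos : ∀ k, 0 < R k := fun k => by positivity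
  set s : ℕ → Set (ℝ × ℝ) := fun k => Icc (-R k, -R k) (R k, R k) with hs
  have hmono : Monotone s := by
    intro k l hkl
    apply Icc_subset_Icc <;> rw [Prod.le_def] <;> constructor <;> simp [hR] <;>
      · push_cast; have : (k:ℝ) ≤ l := by exact_mod_cast hkl
        linarith
  have hunion : (⋃ k, s k) = univ := by
    apply eq_univ_iff_forall.2
    intro p
    rcases exists_nat_ge (max |p.1| |p.2|) with ⟨k, hk⟩
    refine mem_iUnion.2 ⟨k, ?_⟩
    have hkR : (k : ℝ) ≤ R k := by simp [hR]
    have h1 : |p.1| ≤ R k := le_trans (le_trans (le_max_left _ _) hk) hkR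
    have h2 : |p.2| ≤ R k := le_trans (le_trans (le_max_right _ _) hk) hkR
    rw [abs_le] at h1 h2
    exact ⟨⟨h1.1, h2.1⟩, ⟨h1.2, h2.2⟩⟩
  have htend : Filter.Tendsto (fun k => ∫ p in s k, dv (Phi.symm p)) Filter.atTop
      (nhds (∫ p, dv (Phi.symm p))) := by
    have := tendsto_setIntegral_of_monotone (fun k => measurableSet_Icc) hmono
      (by rw [hunion]; exact hIntp.integrableOn)
    rwa [hunion, setIntegral_univ] at this
  -- pointwise bounds on faces
  have hb : ∀ (k : ℕ) (z : E2), R k ≤ ‖z‖ → ∀ (w : E2 → ℝ),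
      (∀ x, |w x| ≤ C * (1 + ‖x‖) ^ (-3 : ℝ)) → ‖w z‖ ≤ C * (1 + R k) ^ (-3 : ℝ) := by
    intro k z hz w hw
    refine le_trans (hw z) (mul_le_mul_of_nonneg_left ?_ hC0)
    exact rpow_neg3_antitone (by positivity) (by linarith)
  have hcoord1 : ∀ y r : ℝ, r ≤ ‖Phi.symm (r, y)‖ := by
    intro y r
    have h := coord_abs_le (Phi.symm (r, y)) 0
    have : (Phi.symm (r, y)) 0 = r := rfl
    rw [this] at h
    exact (le_abs_self r).trans h
  have hcoord1' : ∀ y r : ℝ, r ≤ ‖Phi.symm (-r, y)‖ := by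
    intro y r
    have h := coord_abs_le (Phi.symm (-r, y)) 0
    have : (Phi.symm (-r, y)) 0 = -r := rfl
    rw [this, abs_neg] at h
    exact (le_abs_self r).trans h
  have hcoord2 : ∀ x r : ℝ, r ≤ ‖Phi.symm (x, r)‖ := by
    intro x r
    have h := coord_abs_le (Phi.symm (x, r)) 1
    have : (Phi.symm (x, r)) 1 = r := rfl
    rw [this] at h
    exact (le_abs_self r).trans h
  have hcoord2' : ∀ x r : ℝ, r ≤ ‖Phi.symm (x, -r)‖ := by
    intro x r
    have h := coord_abs_le (Phi.symm (x, -r)) 1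
    have : (Phi.symm (x, -r)) 1 = -r := rfl
    rw [this, abs_neg] at h
    exact (le_abs_self r).trans h
  -- the box identity and bound
  have hkey : ∀ k : ℕ, ‖∫ p in s k, dv (Phi.symm p)‖ ≤ 8 * C * R k * (1 + R k) ^ (-3 : ℝ) := by
    intro k
    have hle : ((-R k, -R k) : ℝ × ℝ) ≤ (R k, R k) := by
      constructor <;> simp <;> linarith [hRpos k]
    have hId := integral_divergence_prod_Icc_of_hasFDerivAt_off_countable_of_le
      f g f' g' (-R k, -R k) (R k, R k) hle ∅ countable_empty
      ((h₀.continuous.comp Phi.symm.continuous).continuousOn)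
      ((h₁.continuous.comp Phi.symm.continuous).continuousOn)
      (fun p _ => hdf p) (fun p _ => hdg p)
      (by rw [show (fun p => f' p (1, 0) + g' p (0, 1)) = fun p => dv (Phi.symm p) from e]
          exact hIntp.integrableOn)
    rw [show (fun p => f' p (1, 0) + g' p (0, 1)) = fun p => dv (Phi.symm p) from e] at hId
    rw [show s k = Icc ((-R k, -R k) : ℝ × ℝ) (R k, R k) from rfl, hId]
    have hfb : ∀ y, ‖f ((R k, R k).1, y)‖ ≤ C * (1 + R k) ^ (-3 : ℝ) := fun y =>
      hb k _ (hcoord1 y (R k)) w₀ hd₀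
    have hfb' : ∀ y, ‖f ((-R k, -R k).1, y)‖ ≤ C * (1 + R k) ^ (-3 : ℝ) := fun y =>
      hb k _ (hcoord1' y (R k)) w₀ hd₀
    have hgb : ∀ x, ‖g (x, (R k, R k).2)‖ ≤ C * (1 + R k) ^ (-3 : ℝ) := fun x =>
      hb k _ (hcoord2 x (R k)) w₁ hd₁
    have hgb' : ∀ x, ‖g (x, (-R k, -R k).2)‖ ≤ C * (1 + R k) ^ (-3 : ℝ) := fun x =>
      hb k _ (hcoord2' x (R k)) w₁ hd₁
    have habs : |R k - (-R k)| = 2 * R k := by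
      rw [abs_of_nonneg (by linarith [hRpos k])]; ring
    have h1 : ‖∫ x in (-R k)..(R k), g (x, (R k, R k).2)‖ ≤
        C * (1 + R k) ^ (-3 : ℝ) * (2 * R k) := by
      rw [← habs]
      exact intervalIntegral.norm_integral_le_of_norm_le_const (fun x _ => hgb x)
    have h2 : ‖∫ x in (-R k)..(R k), g (x, (-R k, -R k).2)‖ ≤
        C * (1 + R k) ^ (-3 : ℝ) * (2 * R k) := by
      rw [← habs]
      exact intervalIntegral.norm_integral_le_of_norm_le_const (fun x _ => hgb' x)
    have h3 : ‖∫ y in (-R k)..(R k), f ((R k, R k).1, y)‖ ≤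
        C * (1 + R k) ^ (-3 : ℝ) * (2 * R k) := by
      rw [← habs]
      exact intervalIntegral.norm_integral_le_of_norm_le_const (fun y _ => hfb y)
    have h4 : ‖∫ y in (-R k)..(R k), f ((-R k, -R k).1, y)‖ ≤
        C * (1 + R k) ^ (-3 : ℝ) * (2 * R k) := by
      rw [← habs]
      exact intervalIntegral.norm_integral_le_of_norm_le_const (fun y _ => hfb' y)
    have := abs4 h1 h2 h3 h4
    calc ‖(((∫ x in (-R k)..(R k), g (x, (R k, R k).2)) -
            ∫ x in (-R k)..(R k), g (x, (-R k, -R k).2)) +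
            ∫ y in (-R k)..(R k), f ((R k, R k).1, y)) -
            ∫ y in (-R k)..(R k), f ((-R k, -R k).1, y)‖
        ≤ 4 * (C * (1 + R k) ^ (-3 : ℝ) * (2 * R k)) := this
      _ = 8 * C * R k * (1 + R k) ^ (-3 : ℝ) := by ring
  -- limit of the bound
  have hbnd0 : Filter.Tendsto (fun k : ℕ => 8 * C * R k * (1 + R k) ^ (-3 : ℝ))
      Filter.atTop (nhds 0) := by
    have h8 : Filter.Tendsto (fun k : ℕ => 8 * C * (1 / R k)) Filter.atTop (nhds 0) := by
      have : Filter.Tendsto (fun k : ℕ => 1 / R k) Filter.atTop (nhds 0) := by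
        simp only [hR]
        exact tendsto_one_div_add_atTop_nhds_zero_nat
      simpa using this.const_mul (8 * C)
    apply squeeze_zero_norm _ h8
    intro k
    have hRk := hRpos k
    have hpos : (0:ℝ) < 1 + R k := by linarith
    have key : R k * (1 + R k) ^ (-3 : ℝ) ≤ 1 / R k := by
      rw [Real.rpow_neg hpos.le, show ((3:ℝ) = ((3:ℕ):ℝ)) by norm_num, Real.rpow_natCast]
      rw [div_eq_mul_inv, one_mul]
      have h1 : R k * ((1 + R k) ^ (3:ℕ))⁻¹ * ((1 + R k) ^ (3:ℕ) * R k) ≤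
          (R k)⁻¹ * ((1 + R k) ^ (3:ℕ) * R k) := by
        have expand : R k * ((1 + R k) ^ (3:ℕ))⁻¹ * ((1 + R k) ^ (3:ℕ) * R k) =
            R k ^ 2 * ((1 + R k) ^ (3:ℕ) * ((1 + R k) ^ (3:ℕ))⁻¹) := by ring
        have expand2 : (R k)⁻¹ * ((1 + R k) ^ (3:ℕ) * R k) =
            (1 + R k) ^ (3:ℕ) * (R k * (R k)⁻¹) := by ring
        rw [expand, expand2, mul_inv_cancel₀ (by positivity), mul_inv_cancel₀ hRk.ne', mul_one,
          mul_one]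
        nlinarith [hRk]
      exact le_of_mul_le_mul_right h1 (by positivity)
    calc ‖8 * C * R k * (1 + R k) ^ (-3 : ℝ)‖ = 8 * C * (R k * (1 + R k) ^ (-3 : ℝ)) := by
          rw [Real.norm_eq_abs, abs_of_nonneg (by positivity)]; ring
      _ ≤ 8 * C * (1 / R k) := by
          apply mul_le_mul_of_nonneg_left key (by linarith)
  have hzero : Filter.Tendsto (fun k => ∫ p in s k, dv (Phi.symm p)) Filter.atTop (nhds 0) :=
    squeeze_zero_norm hkey hbnd0
  have := tendsto_nhds_unique htend hzero
  rw [← hEq, this]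



noncomputable def lweight (x : E2) : ℝ := Real.log (1 + ‖x‖ ^ 2)

lemma lweight_nonneg (x : E2) : 0 ≤ lweight x :=
  Real.log_nonneg (by nlinarith [sq_nonneg ‖x‖])

lemma lweight_le (x : E2) : lweight x ≤ (1 + ‖x‖) ^ (2:ℝ) := by
  have h1 : lweight x ≤ 1 + ‖x‖ ^ 2 - 1 :=
    (Real.log_le_sub_one_of_pos (by positivity))
  have h2 : (1 + ‖x‖) ^ (2:ℝ) = (1 + ‖x‖) ^ (2:ℕ) := by
    rw [show ((2:ℝ) = ((2:ℕ):ℝ)) by norm_num, Real.rpow_natCast]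
  rw [h2]
  have := norm_nonneg x
  nlinarith

lemma contDiff_lweight : ContDiff ℝ (⊤ : ℕ∞) lweight := by
  apply ContDiff.log
  · exact contDiff_const.add (contDiff_norm_sq ℝ)
  · intro x; positivity

noncomputable def gphi (x : E2) : E2 := (2 / (1 + ‖x‖ ^ 2)) • x

lemma continuous_gphi : Continuous gphi := by
  refine Continuous.smul (f := fun x : E2 => 2 / (1 + ‖x‖ ^ 2)) (g := fun x : E2 => x) ?_ continuous_id
  exact continuous_const.div (by continuity) (fun x => by positivity)

lemma hasFDerivAt_lweight (x : E2) :
    HasFDerivAt lweight ((1 + ‖x‖ ^ 2)⁻¹ • (2 • (innerSL ℝ x))) x := by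
  have h1 : HasFDerivAt (fun y : E2 => 1 + ‖y‖ ^ 2) (2 • (innerSL ℝ x)) x := by
    have := (hasFDerivAt_id x).norm_sq
    rw [ContinuousLinearMap.comp_id] at this
    exact this.const_add 1
  exact h1.log (by positivity)

lemma pderiv2_lweight (i : Fin 2) (x : E2) : pderiv2 i lweight x = gphi x i := by
  rw [pderiv2, (hasFDerivAt_lweight x).fderiv]
  simp only [ContinuousLinearMap.smul_apply, innerSL_apply_apply, gphi]
  rw [EuclideanSpace.inner_single_right]
  simp only [PiLp.smul_apply, smul_eq_mul]
  have : (0:ℝ) < 1 + ‖x‖ ^ 2 := by positivity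
  field_simp
  simp [nsmul_eq_mul]

lemma norm_gphi_le (x : E2) : ‖gphi x‖ ≤ 1 := by
  rw [gphi, norm_smul]
  have h : (0:ℝ) < 1 + ‖x‖ ^ 2 := by positivity
  rw [Real.norm_eq_abs, abs_of_nonneg (by positivity)]
  rw [div_mul_eq_mul_div, div_le_one h]
  nlinarith [sq_nonneg (‖x‖ - 1), norm_nonneg x]

section Slices

variable {T : ℝ}

lemma slice_contDiff {u : E2 → ℝ → ℝ}
    (hu : ContDiffOn ℝ (⊤ : ℕ∞) (fun p : E2 × ℝ => u p.1 p.2) (univ ×ˢ Icc 0 T))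
    {t : ℝ} (ht : t ∈ Icc 0 T) : ContDiff ℝ (⊤ : ℕ∞) (fun y => u y t) := by
  rw [← contDiffOn_univ]
  exact hu.comp ((contDiff_id.prodMk contDiff_const).contDiffOn)
    (fun y _ => ⟨mem_univ _, ht⟩)

lemma time_slice_hasDerivAt {u : E2 → ℝ → ℝ}
    (hu : ContDiffOn ℝ (⊤ : ℕ∞) (fun p : E2 × ℝ => u p.1 p.2) (univ ×ˢ Icc 0 T))
    {x : E2} {t : ℝ} (ht : t ∈ Ioo 0 T) :
    HasDerivAt (u x) (deriv (u x) t) t := by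
  have hS : (univ ×ˢ Icc 0 T : Set (E2 × ℝ)) ∈ nhds (x, t) :=
    prod_mem_nhds Filter.univ_mem (Icc_mem_nhds ht.1 ht.2)
  have hjoint : DifferentiableAt ℝ (fun p : E2 × ℝ => u p.1 p.2) (x, t) :=
    (hu.contDiffAt hS).differentiableAt (by simp)
  have hmap : DifferentiableAt ℝ (fun s : ℝ => ((x, s) : E2 × ℝ)) t :=
    (differentiableAt_const x).prodMk differentiableAt_id
  have : DifferentiableAt ℝ (fun s : ℝ => u x s) t := by
    have := DifferentiableAt.comp t hjoint hmap
    exact this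
  exact this.hasDerivAt

lemma time_slice_continuousOn {u : E2 → ℝ → ℝ}
    (hu : ContDiffOn ℝ (⊤ : ℕ∞) (fun p : E2 × ℝ => u p.1 p.2) (univ ×ˢ Icc 0 T))
    (x : E2) : ContinuousOn (fun s => u x s) (Icc 0 T) := by
  have : ContinuousOn (fun p : E2 × ℝ => u p.1 p.2) (univ ×ˢ Icc 0 T) := hu.continuousOn
  exact this.comp ((continuous_const.prodMk continuous_id).continuousOn)
    (fun s hs => ⟨mem_univ _, hs⟩)

/-- joint continuity of the spatial fderiv of slices, on the open slab. -/
lemma slice_fderiv_contOn {u : E2 → ℝ → ℝ} (hT : 0 < T)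
    (hu : ContDiffOn ℝ (⊤ : ℕ∞) (fun p : E2 × ℝ => u p.1 p.2) (univ ×ˢ Icc 0 T)) :
    ContinuousOn (fun p : E2 × ℝ => fderiv ℝ (fun y => u y p.2) p.1)
      (univ ×ˢ Ioo 0 T) := by
  set U : Set (E2 × ℝ) := univ ×ˢ Ioo 0 T with hU
  have hUopen : IsOpen U := isOpen_univ.prod isOpen_Ioo
  have hu' : ContDiffOn ℝ (⊤ : ℕ∞) (fun p : E2 × ℝ => u p.1 p.2) U :=
    hu.mono (prod_mono le_rfl Ioo_subset_Icc_self)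
  have hfc : ContinuousOn (fderiv ℝ (fun p : E2 × ℝ => u p.1 p.2)) U :=
    hu'.continuousOn_fderiv_of_isOpen hUopen (by simp)
  have key : ∀ p ∈ U, fderiv ℝ (fun y => u y p.2) p.1 =
      (fderiv ℝ (fun p : E2 × ℝ => u p.1 p.2) p).comp
        ((ContinuousLinearMap.id ℝ E2).prod 0) := by
    rintro ⟨x, s⟩ hp
    have hjoint : DifferentiableAt ℝ (fun p : E2 × ℝ => u p.1 p.2) (x, s) :=
      (hu'.contDiffAt (hUopen.mem_nhds hp)).differentiableAt (by simp)
    have hmap : HasFDerivAt (fun y : E2 => ((y, s) : E2 × ℝ))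
        ((ContinuousLinearMap.id ℝ E2).prod 0) x :=
      (hasFDerivAt_id x).prodMk (hasFDerivAt_const s x)
    have := (hjoint.hasFDerivAt.comp x hmap)
    exact this.fderiv
  exact (hfc.clm_comp continuousOn_const).congr key

end Slices

open InnerProductSpace in
lemma pderiv2_eq_inner_gradient (f : E2 → ℝ) (x : E2) (i : Fin 2) :
    pderiv2 i f x = @inner ℝ _ _ (gradient f x) (EuclideanSpace.single i 1) := by
  rw [pderiv2, gradient, toDual_symm_apply]

lemma abs_pderiv2_le (f : E2 → ℝ) (x : E2) (i : Fin 2) :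
    |pderiv2 i f x| ≤ ‖gradient f x‖ := by
  rw [pderiv2_eq_inner_gradient]
  have h := abs_real_inner_le_norm (gradient f x) (EuclideanSpace.single i 1)
  simpa [EuclideanSpace.norm_single] using h

lemma gradient_coord (f : E2 → ℝ) (x : E2) (i : Fin 2) :
    (gradient f x) i = pderiv2 i f x := by
  rw [pderiv2_eq_inner_gradient]
  rw [EuclideanSpace.inner_single_right]
  simp

lemma continuous_gradient_of_contDiff {f : E2 → ℝ} (hf : ContDiff ℝ (⊤ : ℕ∞) f) :
    Continuous (fun x => gradient f x) := by
  have h0 : ContDiff ℝ (⊤ : ℕ∞) (fderiv ℝ f) := hf.fderiv_right (by simp)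
  have h : Continuous (fderiv ℝ f) := h0.continuous
  exact (InnerProductSpace.toDual ℝ E2).symm.continuous.comp h

lemma fderiv_log_sub {ns cs : E2 → ℝ} (hns : ContDiff ℝ (⊤ : ℕ∞) ns) (hcs : ContDiff ℝ (⊤ : ℕ∞) cs)
    (hpos : ∀ y, 0 < ns y) (x : E2) :
    fderiv ℝ (fun y => Real.log (ns y) - cs y) x
      = (ns x)⁻¹ • fderiv ℝ ns x - fderiv ℝ cs x := by
  have h1 : HasFDerivAt (fun y => Real.log (ns y)) ((ns x)⁻¹ • fderiv ℝ ns x) x :=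
    ((hns.differentiable (by simp) x).hasFDerivAt).log (hpos x).ne'
  exact (h1.sub ((hcs.differentiable (by simp) x).hasFDerivAt)).fderiv

lemma inner_expand (a b : E2) : @inner ℝ _ _ a b = a 0 * b 0 + a 1 * b 1 := by
  simp [PiLp.inner_apply, Fin.sum_univ_two, RCLike.inner_apply, mul_comm]

/-- key coordinate identity: `n ∇(log n - c) = ∇n - n ∇c` -/
lemma nV_eq {ns cs : E2 → ℝ} (hns : ContDiff ℝ (⊤ : ℕ∞) ns) (hcs : ContDiff ℝ (⊤ : ℕ∞) cs)
    (hpos : ∀ y, 0 < ns y) (x : E2) (i : Fin 2) :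
    ns x * (gradient (fun y => Real.log (ns y) - cs y) x) i
      = pderiv2 i ns x - ns x * pderiv2 i cs x := by
  rw [gradient_coord, pderiv2, fderiv_log_sub hns hcs hpos x]
  simp only [ContinuousLinearMap.sub_apply, ContinuousLinearMap.smul_apply, smul_eq_mul]
  rw [← pderiv2, ← pderiv2]
  field_simp [(hpos x).ne']


lemma integrable_onePlus_rpow' {r : ℝ} (hr : 2 < r) :
    Integrable (fun x : E2 => (1 + ‖x‖) ^ (-r)) := by
  apply integrable_one_add_norm (E := E2)
  simpa [finrank_euclideanSpace] using hr

lemma one_add_pow_le (s : ℝ) (hs : 0 ≤ s) (k : ℕ) :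
    (1 + s) ^ k ≤ 2 ^ k * (1 + s ^ k) := by
  rcases le_total s 1 with h | h
  · have h1 : (1 + s) ^ k ≤ 2 ^ k := by
      apply pow_le_pow_left₀ (by linarith) (by linarith)
    nlinarith [pow_nonneg hs k, pow_pos (show (0:ℝ) < 2 by norm_num) k]
  · have h1 : (1 + s) ^ k ≤ (2 * s) ^ k := by
      apply pow_le_pow_left₀ (by linarith) (by linarith)
    rw [mul_pow] at h1
    nlinarith [pow_pos (show (0:ℝ) < 2 by norm_num) k]

lemma decay_upgrade {T : ℝ} {q : E2 → ℝ → ℝ}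
    (hq0 : ∀ x, ∀ t ∈ Icc (0:ℝ) T, 0 ≤ q x t)
    (hdec : ∀ k : ℕ, ∃ A : ℝ, ∀ x, ∀ t ∈ Icc (0:ℝ) T, ‖x‖ ^ k * q x t ≤ A)
    (k : ℕ) : ∃ B : ℝ, 0 ≤ B ∧
      ∀ x, ∀ t ∈ Icc (0:ℝ) T, q x t ≤ B * (1 + ‖x‖) ^ (-(k:ℝ)) := by
  obtain ⟨A0, hA0⟩ := hdec 0
  obtain ⟨Ak, hAk⟩ := hdec k
  refine ⟨2 ^ k * (max A0 0 + max Ak 0), by positivity, ?_⟩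
  intro x t ht
  have hs : (0:ℝ) ≤ ‖x‖ := norm_nonneg x
  have h0 : q x t ≤ max A0 0 := by
    have := hA0 x t ht; simp only [pow_zero, one_mul] at this
    exact this.trans (le_max_left _ _)
  have hk : ‖x‖ ^ k * q x t ≤ max Ak 0 := (hAk x t ht).trans (le_max_left _ _)
  have hq := hq0 x t ht
  have hpow : (1 + ‖x‖) ^ k * q x t ≤ 2 ^ k * (max A0 0 + max Ak 0) := by
    calc (1 + ‖x‖) ^ k * q x t ≤ 2 ^ k * (1 + ‖x‖ ^ k) * q x t := by
          apply mul_le_mul_of_nonneg_right (one_add_pow_le ‖x‖ hs k) hq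
      _ = 2 ^ k * (q x t + ‖x‖ ^ k * q x t) := by ring
      _ ≤ 2 ^ k * (max A0 0 + max Ak 0) := by
          apply mul_le_mul_of_nonneg_left (add_le_add h0 hk) (by positivity)
  have hb : (0:ℝ) < (1 + ‖x‖) ^ k := by positivity
  rw [show (-(k:ℝ)) = -((k:ℕ):ℝ) from rfl, Real.rpow_neg (by linarith), Real.rpow_natCast]
  rw [mul_comm, inv_mul_eq_div, le_div_iff₀ hb]
  calc q x t * (1+‖x‖)^k = (1+‖x‖)^k * q x t := by ring
    _ ≤ _ := hpow

end LogMoment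
open LogMoment in
/-- Logarithmic moment estimate. -/
theorem log_moment_estimate (T M : ℝ) (hT : 0 < T)
    (n c : EuclideanSpace ℝ (Fin 2) → ℝ → ℝ)
    -- smoothness of c and n on ℝ² × [0,T]
    (hc : ContDiffOn ℝ (⊤ : ℕ∞) (fun p : EuclideanSpace ℝ (Fin 2) × ℝ => c p.1 p.2)
      ((Set.univ : Set (EuclideanSpace ℝ (Fin 2))) ×ˢ Set.Icc 0 T))
    (hn : ContDiffOn ℝ (⊤ : ℕ∞) (fun p : EuclideanSpace ℝ (Fin 2) × ℝ => n p.1 p.2)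
      ((Set.univ : Set (EuclideanSpace ℝ (Fin 2))) ×ˢ Set.Icc 0 T))
    -- positivity of n
    (hnpos : ∀ x : EuclideanSpace ℝ (Fin 2), ∀ t ∈ Set.Icc (0 : ℝ) T, 0 < n x t)
    -- the equation ∂ₜ n = Δn − ∇·(n ∇c) pointwise on ℝ² × (0,T)
    (heq : ∀ x : EuclideanSpace ℝ (Fin 2), ∀ t ∈ Set.Ioo (0 : ℝ) T,
      deriv (n x) t =
        (∑ i, pderiv2 i (pderiv2 i (fun y => n y t)) x) -
        ∑ i, pderiv2 i (fun y => n y t * pderiv2 i (fun w => c w t) y) x)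
    -- total mass M
    (hmass : ∀ t ∈ Set.Icc (0 : ℝ) T, (∫ x, n x t) = M)
    -- decay, uniformly in t ∈ [0,T], of n, ∇n, ∂ₜn, n∇c and n|∇(log n − c)|²,
    -- faster than any power of |x|
    (hdecay : ∀ k : ℕ, ∃ A : ℝ, ∀ x : EuclideanSpace ℝ (Fin 2), ∀ t ∈ Set.Icc (0 : ℝ) T,
      ‖x‖ ^ k * (n x t + ‖gradient (fun y => n y t) x‖ + |deriv (n x) t| +
        n x t * ‖gradient (fun y => c y t) x‖ +
        n x t * ‖gradient (fun y => Real.log (n y t) - c y t) x‖ ^ 2) ≤ A) :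
    ∀ δ : ℝ, 0 < δ → ∀ t ∈ Set.Icc (0 : ℝ) T,
      (∫⁻ x, ENNReal.ofReal (n x t * Real.log (1 + ‖x‖ ^ 2))) ≤
        (∫⁻ x, ENNReal.ofReal (n x 0 * Real.log (1 + ‖x‖ ^ 2))) +
        ENNReal.ofReal (M / (2 * δ) * t) +
        ENNReal.ofReal (δ / 2) *
          ∫⁻ s in Set.Ioc (0 : ℝ) t, ∫⁻ x, ENNReal.ofReal
            (n x s * ‖gradient (fun y => Real.log (n y s) - c y s) x‖ ^ 2) := by
  intro δ hδ t ht
  have hT0 : (0:ℝ) ∈ Icc (0:ℝ) T := ⟨le_rfl, hT.le⟩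
  -- slice smoothness
  have hns : ∀ s ∈ Icc (0:ℝ) T, ContDiff ℝ (⊤ : ℕ∞) (fun y => n y s) :=
    fun s hs => slice_contDiff hn hs
  have hcs : ∀ s ∈ Icc (0:ℝ) T, ContDiff ℝ (⊤ : ℕ∞) (fun y => c y s) :=
    fun s hs => slice_contDiff hc hs
  have hls : ∀ s ∈ Icc (0:ℝ) T, ContDiff ℝ (⊤ : ℕ∞) (fun y => Real.log (n y s) - c y s) :=
    fun s hs => ((hns s hs).log (fun y => (hnpos y s hs).ne')).sub (hcs s hs)
  -- decay upgrades
  have hsum0 : ∀ (x : E2), ∀ s ∈ Icc (0:ℝ) T,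
      0 ≤ n x s + ‖gradient (fun y => n y s) x‖ + |deriv (n x) s| +
        n x s * ‖gradient (fun y => c y s) x‖ +
        n x s * ‖gradient (fun y => Real.log (n y s) - c y s) x‖ ^ 2 := by
    intro x s hs
    have h1 := (hnpos x s hs).le
    have h2 := norm_nonneg (gradient (fun y => n y s) x)
    have h3 := abs_nonneg (deriv (n x) s)
    have h4 := mul_nonneg h1 (norm_nonneg (gradient (fun y => c y s) x))
    have h5 := mul_nonneg h1 (pow_nonneg (norm_nonneg
      (gradient (fun y => Real.log (n y s) - c y s) x)) 2)
    linarith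
  obtain ⟨B3, hB30, hB3⟩ := decay_upgrade hsum0 hdecay 3
  obtain ⟨B5, hB50, hB5⟩ := decay_upgrade hsum0 hdecay 5
  simp only [Nat.cast_ofNat] at hB3 hB5
  -- componentwise decay
  have key : ∀ (B : ℝ) (r : ℝ)
      (hB : ∀ (x : E2), ∀ s ∈ Icc (0:ℝ) T,
        n x s + ‖gradient (fun y => n y s) x‖ + |deriv (n x) s| +
        n x s * ‖gradient (fun y => c y s) x‖ +
        n x s * ‖gradient (fun y => Real.log (n y s) - c y s) x‖ ^ 2 ≤ B * (1+‖x‖) ^ r),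
      ∀ (x : E2), ∀ s ∈ Icc (0:ℝ) T,
      n x s ≤ B * (1+‖x‖) ^ r ∧
      ‖gradient (fun y => n y s) x‖ ≤ B * (1+‖x‖) ^ r ∧
      |deriv (n x) s| ≤ B * (1+‖x‖) ^ r ∧
      n x s * ‖gradient (fun y => c y s) x‖ ≤ B * (1+‖x‖) ^ r ∧
      n x s * ‖gradient (fun y => Real.log (n y s) - c y s) x‖ ^ 2 ≤ B * (1+‖x‖) ^ r ∧
      n x s * ‖gradient (fun y => Real.log (n y s) - c y s) x‖ ≤ 2 * (B * (1+‖x‖) ^ r) := by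
    intro B r hB x s hs
    have hsum := hB x s hs
    have h1 := (hnpos x s hs).le
    have h2 := norm_nonneg (gradient (fun y => n y s) x)
    have h3 := abs_nonneg (deriv (n x) s)
    have h4 := mul_nonneg h1 (norm_nonneg (gradient (fun y => c y s) x))
    have h5 := mul_nonneg h1 (pow_nonneg (norm_nonneg
      (gradient (fun y => Real.log (n y s) - c y s) x)) 2)
    refine ⟨by linarith, by linarith, by linarith, by linarith, by linarith, ?_⟩
    -- AM-GM : n‖g‖ ≤ n + n ‖g‖²
    have hg := norm_nonneg (gradient (fun y => Real.log (n y s) - c y s) x)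
    have hamgm : n x s * ‖gradient (fun y => Real.log (n y s) - c y s) x‖ ≤
        n x s + n x s * ‖gradient (fun y => Real.log (n y s) - c y s) x‖ ^ 2 := by
      nlinarith [mul_nonneg h1 hg, sq_nonneg (‖gradient (fun y => Real.log (n y s) - c y s) x‖ - 1)]
    linarith
  have key3 := key B3 (-3 : ℝ) hB3
  have key5 := key B5 (-5 : ℝ) hB5
  -- integrable bounds
  have hint3 : Integrable (fun x : E2 => B3 * (1+‖x‖) ^ (-3:ℝ)) :=
    (integrable_onePlus_rpow (by norm_num)).const_mul B3
  have hint3' : Integrable (fun x : E2 => 2 * (B3 * (1+‖x‖) ^ (-3:ℝ))) :=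
    hint3.const_mul 2
  have hint53 : Integrable (fun x : E2 => B5 * (1+‖x‖) ^ (-3:ℝ)) :=
    (integrable_onePlus_rpow (by norm_num)).const_mul B5
  have hrp : ∀ x : E2, (1+‖x‖) ^ (-5:ℝ) * (1+‖x‖) ^ (2:ℝ) = (1+‖x‖) ^ (-3:ℝ) := by
    intro x
    rw [← Real.rpow_add (by positivity)]
    norm_num
  -- bound for n * lweight
  have hflb : ∀ (x : E2), ∀ s ∈ Icc (0:ℝ) T,
      ‖n x s * lweight x‖ ≤ B5 * (1+‖x‖) ^ (-3:ℝ) := by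
    intro x s hs
    rw [Real.norm_eq_abs, abs_of_nonneg (mul_nonneg (hnpos x s hs).le (lweight_nonneg x))]
    calc n x s * lweight x ≤ (B5 * (1+‖x‖) ^ (-5:ℝ)) * ((1+‖x‖) ^ (2:ℝ)) := by
          apply mul_le_mul (key5 x s hs).1 (lweight_le x) (lweight_nonneg x) (by positivity)
      _ = B5 * (1+‖x‖) ^ (-3:ℝ) := by rw [mul_assoc, hrp]
  -- per-slice integrability
  have hInt_n : ∀ s ∈ Icc (0:ℝ) T, Integrable (fun x : E2 => n x s) := by
    intro s hs
    apply Integrable.mono' hint3 ((hns s hs).continuous.aestronglyMeasurable)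
    apply Filter.Eventually.of_forall
    intro x
    rw [Real.norm_eq_abs, abs_of_pos (hnpos x s hs)]
    exact (key3 x s hs).1
  have hInt_f : ∀ s ∈ Icc (0:ℝ) T, Integrable (fun x : E2 => n x s * lweight x) := by
    intro s hs
    apply Integrable.mono' hint53
      (((hns s hs).continuous.mul contDiff_lweight.continuous).aestronglyMeasurable)
    exact Filter.Eventually.of_forall (fun x => hflb x s hs)
  have hInt_q : ∀ s ∈ Icc (0:ℝ) T, Integrable
      (fun x : E2 => n x s * ‖gradient (fun y => Real.log (n y s) - c y s) x‖ ^ 2) := by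
    intro s hs
    apply Integrable.mono' hint3
    · exact ((hns s hs).continuous.mul
        (((continuous_gradient_of_contDiff (hls s hs)).norm).pow 2)).aestronglyMeasurable
    · apply Filter.Eventually.of_forall
      intro x
      rw [Real.norm_eq_abs, abs_of_nonneg (mul_nonneg (hnpos x s hs).le
        (pow_nonneg (norm_nonneg _) 2))]
      exact (key3 x s hs).2.2.2.2.1
  -- continuity of F
  have hFc : ContinuousOn (fun s => ∫ x, n x s * lweight x) (Icc (0:ℝ) T) := by
    apply continuousOn_of_dominated (bound := fun x : E2 => B5 * (1+‖x‖) ^ (-3:ℝ))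
    · exact fun s hs =>
        ((hns s hs).continuous.mul contDiff_lweight.continuous).aestronglyMeasurable
    · exact fun s hs => Filter.Eventually.of_forall (fun x => hflb x s hs)
    · exact hint53
    · exact Filter.Eventually.of_forall (fun x =>
        (time_slice_continuousOn hn x).mul continuousOn_const)
  -- joint continuity of the gradient of log n - c on the open slab
  have hgwJoint : ContinuousOn
      (fun p : E2 × ℝ => gradient (fun y => Real.log (n y p.2) - c y p.2) p.1)
      (univ ×ˢ Ioo (0:ℝ) T) := by
    have hlog : ContDiffOn ℝ (⊤ : ℕ∞) (fun p : E2 × ℝ => Real.log (n p.1 p.2) - c p.1 p.2)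
        (univ ×ˢ Icc 0 T) :=
      (hn.log (fun p hp => (hnpos p.1 p.2 hp.2).ne')).sub hc
    have hfd := slice_fderiv_contOn (u := fun y s => Real.log (n y s) - c y s) hT hlog
    exact ((InnerProductSpace.toDual ℝ E2).symm.continuous.comp_continuousOn hfd)
  -- continuity of D on the open interval
  have hDc : ContinuousOn
      (fun s => ∫ x, n x s * ‖gradient (fun y => Real.log (n y s) - c y s) x‖ ^ 2)
      (Ioo (0:ℝ) T) := by
    apply continuousOn_of_dominated (bound := fun x : E2 => B3 * (1+‖x‖) ^ (-3:ℝ))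
    · intro s hs
      have hs' : s ∈ Icc (0:ℝ) T := Ioo_subset_Icc_self hs
      exact ((hns s hs').continuous.mul
        (((continuous_gradient_of_contDiff (hls s hs')).norm).pow 2)).aestronglyMeasurable
    · intro s hs
      have hs' : s ∈ Icc (0:ℝ) T := Ioo_subset_Icc_self hs
      apply Filter.Eventually.of_forall
      intro x
      rw [Real.norm_eq_abs, abs_of_nonneg (mul_nonneg (hnpos x s hs').le
        (pow_nonneg (norm_nonneg _) 2))]
      exact (key3 x s hs').2.2.2.2.1
    · exact hint3
    · apply Filter.Eventually.of_forall
      intro x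
      have h1 : ContinuousOn (fun s => n x s) (Ioo (0:ℝ) T) :=
        (time_slice_continuousOn hn x).mono Ioo_subset_Icc_self
      have h2 : ContinuousOn
          (fun s => gradient (fun y => Real.log (n y s) - c y s) x) (Ioo (0:ℝ) T) := by
        apply hgwJoint.comp ((continuous_const.prodMk continuous_id).continuousOn)
        intro s hs
        exact ⟨mem_univ _, hs⟩
      exact h1.mul ((h2.norm).pow 2)
  -- integrability of D
  have hD0 : ∀ s ∈ Icc (0:ℝ) T,
      0 ≤ ∫ x, n x s * ‖gradient (fun y => Real.log (n y s) - c y s) x‖ ^ 2 :=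
    fun s hs => integral_nonneg (fun x => mul_nonneg (hnpos x s hs).le
      (pow_nonneg (norm_nonneg _) 2))
  have hDbdd : ∀ s ∈ Icc (0:ℝ) T,
      ‖∫ x, n x s * ‖gradient (fun y => Real.log (n y s) - c y s) x‖ ^ 2‖ ≤
        ∫ x : E2, B3 * (1+‖x‖) ^ (-3:ℝ) := by
    intro s hs
    apply norm_integral_le_of_norm_le hint3
    apply Filter.Eventually.of_forall
    intro x
    rw [Real.norm_eq_abs, abs_of_nonneg (mul_nonneg (hnpos x s hs).le
      (pow_nonneg (norm_nonneg _) 2))]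
    exact (key3 x s hs).2.2.2.2.1
  have hDIcc : IntegrableOn
      (fun s => ∫ x, n x s * ‖gradient (fun y => Real.log (n y s) - c y s) x‖ ^ 2)
      (Icc (0:ℝ) T) := by
    rw [integrableOn_Icc_iff_integrableOn_Ioo]
    apply Integrable.mono' (g := fun _ : ℝ => ∫ x : E2, B3 * (1+‖x‖) ^ (-3:ℝ))
    · exact integrableOn_const measure_Ioo_lt_top.ne
    · exact hDc.aestronglyMeasurable measurableSet_Ioo
    · rw [ae_restrict_iff' measurableSet_Ioo]
      exact Filter.Eventually.of_forall (fun s hs => hDbdd s (Ioo_subset_Icc_self hs))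
  -- the primitive P of D
  have hPc : ContinuousOn (fun r => ∫ s in Ioc (0:ℝ) r,
      ∫ x, n x s * ‖gradient (fun y => Real.log (n y s) - c y s) x‖ ^ 2) (Icc (0:ℝ) T) :=
    intervalIntegral.continuousOn_primitive hDIcc
  have hPd : ∀ u ∈ Ioo (0:ℝ) T, HasDerivAt (fun r => ∫ s in Ioc (0:ℝ) r,
      ∫ x, n x s * ‖gradient (fun y => Real.log (n y s) - c y s) x‖ ^ 2)
      (∫ x, n x u * ‖gradient (fun y => Real.log (n y u) - c y u) x‖ ^ 2) u := by
    intro u hu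
    have hii : IntervalIntegrable (fun s =>
        ∫ x, n x s * ‖gradient (fun y => Real.log (n y s) - c y s) x‖ ^ 2) volume 0 u := by
      rw [intervalIntegrable_iff_integrableOn_Icc_of_le hu.1.le]
      exact hDIcc.mono_set (Icc_subset_Icc le_rfl hu.2.le)
    have hmeas : StronglyMeasurableAtFilter (fun s =>
        ∫ x, n x s * ‖gradient (fun y => Real.log (n y s) - c y s) x‖ ^ 2) (nhds u) :=
      hDc.stronglyMeasurableAtFilter isOpen_Ioo u hu
    have hca : ContinuousAt (fun s =>
        ∫ x, n x s * ‖gradient (fun y => Real.log (n y s) - c y s) x‖ ^ 2) u :=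
      hDc.continuousAt (isOpen_Ioo.mem_nhds hu)
    have hFTC := intervalIntegral.integral_hasDerivAt_right hii hmeas hca
    apply hFTC.congr_of_eventuallyEq
    apply Filter.eventuallyEq_of_mem (Ioi_mem_nhds hu.1)
    intro r hr
    exact (intervalIntegral.integral_of_le (le_of_lt hr)).symm
  -- derivative of F under the integral sign
  have hderivCont : ∀ u ∈ Ioo (0:ℝ) T, Continuous (fun x : E2 => deriv (n x) u) := by
    intro u hu
    have hUopen : IsOpen ((univ : Set E2) ×ˢ Ioo (0:ℝ) T) := isOpen_univ.prod isOpen_Ioo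
    have hn' : ContDiffOn ℝ (⊤ : ℕ∞) (fun p : E2 × ℝ => n p.1 p.2) (univ ×ˢ Ioo (0:ℝ) T) :=
      hn.mono (prod_mono le_rfl Ioo_subset_Icc_self)
    have hfc : ContinuousOn (fderiv ℝ (fun p : E2 × ℝ => n p.1 p.2)) (univ ×ˢ Ioo (0:ℝ) T) :=
      hn'.continuousOn_fderiv_of_isOpen hUopen (by simp)
    have hkey : ∀ x : E2, deriv (n x) u
        = (fderiv ℝ (fun p : E2 × ℝ => n p.1 p.2) (x, u)) (0, 1) := by
      intro x
      have hjoint : DifferentiableAt ℝ (fun p : E2 × ℝ => n p.1 p.2) (x, u) :=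
        (hn'.contDiffAt (hUopen.mem_nhds ⟨mem_univ x, hu⟩)).differentiableAt (by simp)
      have hg : HasDerivAt (fun s : ℝ => ((x, s) : EuclideanSpace ℝ (Fin 2) × ℝ)) (0, 1) u :=
        (hasDerivAt_const u x).prodMk (hasDerivAt_id u)
      have hcomp := hjoint.hasFDerivAt.comp_hasDerivAt u hg
      exact hcomp.deriv
    rw [show (fun x : E2 => deriv (n x) u)
        = fun x : E2 => (fderiv ℝ (fun p : E2 × ℝ => n p.1 p.2) (x, u)) (0, 1)
      from funext hkey]
    have hxc : Continuous (fun x : E2 => ((x, u) : EuclideanSpace ℝ (Fin 2) × ℝ)) :=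
      continuous_id.prodMk continuous_const
    have hcont2 : Continuous (fun x : E2 => fderiv ℝ (fun p : E2 × ℝ => n p.1 p.2) (x, u)) := by
      rw [← continuousOn_univ]
      exact hfc.comp hxc.continuousOn (fun x _ => ⟨mem_univ _, hu⟩)
    exact ((ContinuousLinearMap.apply ℝ ℝ ((0, 1) : EuclideanSpace ℝ (Fin 2) × ℝ)).continuous).comp
      hcont2
  have hFd : ∀ u ∈ Ioo (0:ℝ) T,
      HasDerivAt (fun s => ∫ x, n x s * lweight x) (∫ x, deriv (n x) u * lweight x) u := by
    intro u hu
    have hε0 : 0 < min u (T - u) := lt_min hu.1 (sub_pos.2 hu.2)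
    have hball : Metric.ball u (min u (T - u)) ⊆ Ioo (0:ℝ) T := by
      intro s hs
      rw [Metric.mem_ball, Real.dist_eq, abs_lt] at hs
      constructor
      · have := min_le_left u (T - u); linarith [hs.1]
      · have := min_le_right u (T - u); linarith [hs.2]
    have hbnd : ∀ x : E2, ∀ s ∈ Metric.ball u (min u (T - u)),
        ‖deriv (n x) s * lweight x‖ ≤ B5 * (1+‖x‖) ^ (-3:ℝ) := by
      intro x s hs
      have hs' : s ∈ Icc (0:ℝ) T := Ioo_subset_Icc_self (hball hs)
      rw [Real.norm_eq_abs, abs_mul, abs_of_nonneg (lweight_nonneg x)]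
      calc |deriv (n x) s| * lweight x
          ≤ (B5 * (1+‖x‖) ^ (-5:ℝ)) * ((1+‖x‖) ^ (2:ℝ)) :=
            mul_le_mul (key5 x s hs').2.2.1 (lweight_le x) (lweight_nonneg x)
              (by positivity)
        _ = B5 * (1+‖x‖) ^ (-3:ℝ) := by rw [mul_assoc, hrp]
    have H := hasDerivAt_integral_of_dominated_loc_of_deriv_le (μ := volume) (Metric.ball_mem_nhds u hε0)
      (F := fun s (x : E2) => n x s * lweight x)
      (F' := fun s (x : E2) => deriv (n x) s * lweight x)
      (bound := fun x : E2 => B5 * (1+‖x‖) ^ (-3:ℝ))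
      (Filter.eventually_of_mem (isOpen_Ioo.mem_nhds hu) (fun s hs =>
        ((hns s (Ioo_subset_Icc_self hs)).continuous.mul
          contDiff_lweight.continuous).aestronglyMeasurable))
      (hInt_f u (Ioo_subset_Icc_self hu))
      (((hderivCont u hu).mul contDiff_lweight.continuous).aestronglyMeasurable)
      (Filter.Eventually.of_forall (fun x s hs => hbnd x s hs))
      hint53
      (Filter.Eventually.of_forall (fun x s hs =>
        (time_slice_hasDerivAt hn (hball hs)).mul_const (lweight x)))
    exact H.2
  -- integration by parts bound
  have hIBP : ∀ u ∈ Ioo (0:ℝ) T,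
      (∫ x, deriv (n x) u * lweight x) ≤ M / (2*δ) + δ/2 *
        ∫ x, n x u * ‖gradient (fun y => Real.log (n y u) - c y u) x‖ ^ 2 := by
    intro u hu
    have huI : u ∈ Icc (0:ℝ) T := Ioo_subset_Icc_self hu
    have hnsu : ContDiff ℝ (⊤ : ℕ∞) (fun y => n y u) := hns u huI
    have hcsu : ContDiff ℝ (⊤ : ℕ∞) (fun y => c y u) := hcs u huI
    have hposu : ∀ y, 0 < n y u := fun y => hnpos y u huI
    set V : Fin 2 → E2 → ℝ := fun i x =>
      pderiv2 i (fun y => n y u) x - n x u * pderiv2 i (fun y => c y u) x with hV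
    have hVsm : ∀ i, ContDiff ℝ (⊤ : ℕ∞) (V i) := fun i =>
      (pderiv2_contDiff hnsu i).sub (hnsu.mul (pderiv2_contDiff hcsu i))
    -- claim A : the PDE in divergence form
    have hA : ∀ x : E2, deriv (n x) u = pderiv2 0 (V 0) x + pderiv2 1 (V 1) x := by
      intro x
      have h := heq x u hu
      rw [Fin.sum_univ_two, Fin.sum_univ_two] at h
      have hsub : ∀ i : Fin 2, pderiv2 i (V i) x
          = pderiv2 i (pderiv2 i (fun y => n y u)) x
            - pderiv2 i (fun y => n y u * pderiv2 i (fun w => c w u) y) x := by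
        intro i
        have h1 : DifferentiableAt ℝ (pderiv2 i (fun y => n y u)) x :=
          (pderiv2_contDiff hnsu i).differentiable (by simp) x
        have h2 : DifferentiableAt ℝ (fun y => n y u * pderiv2 i (fun w => c w u) y) x :=
          (hnsu.mul (pderiv2_contDiff hcsu i)).differentiable (by simp) x
        have : pderiv2 i (V i) x = fderiv ℝ (fun y =>
            pderiv2 i (fun w => n w u) y - n y u * pderiv2 i (fun w => c w u) y) x
            (EuclideanSpace.single i 1) := rfl
        rw [this, fderiv_fun_sub h1 h2, ContinuousLinearMap.sub_apply]
        rfl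
      rw [hsub 0, hsub 1] at *
      linarith
    -- product rule
    have hB : ∀ (i : Fin 2) (x : E2), pderiv2 i (fun y => V i y * lweight y) x
        = pderiv2 i (V i) x * lweight x + V i x * pderiv2 i lweight x := by
      intro i x
      have h1 : DifferentiableAt ℝ (V i) x := (hVsm i).differentiable (by simp) x
      have h2 : DifferentiableAt ℝ lweight x := contDiff_lweight.differentiable (by simp) x
      have : pderiv2 i (fun y => V i y * lweight y) x
          = fderiv ℝ (fun y => V i y * lweight y) x (EuclideanSpace.single i 1) := rfl
      rw [this, fderiv_fun_mul h1 h2]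
      simp only [ContinuousLinearMap.add_apply, ContinuousLinearMap.smul_apply, smul_eq_mul]
      rw [pderiv2, pderiv2]
      ring
    -- coordinate identity V = n ∇(log n - c)
    have hVg : ∀ (i : Fin 2) (x : E2),
        V i x = n x u * (gradient (fun y => Real.log (n y u) - c y u) x) i := by
      intro i x
      have := nV_eq (ns := fun y => n y u) (cs := fun y => c y u) hnsu hcsu hposu x i
      simpa [hV] using this.symm
    -- inner product identity
    have hI2 : ∀ x : E2, V 0 x * gphi x 0 + V 1 x * gphi x 1
        = n x u * @inner ℝ _ _ (gradient (fun y => Real.log (n y u) - c y u) x) (gphi x) := by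
      intro x
      rw [hVg 0 x, hVg 1 x, inner_expand]
      ring
    -- decay of the vector field
    have hwdec : ∀ (i : Fin 2) (x : E2),
        |V i x * lweight x| ≤ (2*B5) * (1+‖x‖) ^ (-3:ℝ) := by
      intro i x
      have g1 := abs_pderiv2_le (fun y => n y u) x i
      have g2 := abs_pderiv2_le (fun y => c y u) x i
      have k1 := (key5 x u huI).2.1
      have k2 := (key5 x u huI).2.2.2.1
      have hVb : |V i x| ≤ 2 * (B5 * (1+‖x‖) ^ (-5:ℝ)) := by
        have h3 : |V i x| ≤ |pderiv2 i (fun y => n y u) x|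
            + |n x u * pderiv2 i (fun y => c y u) x| := abs_sub _ _
        rw [abs_mul, abs_of_pos (hposu x)] at h3
        have h4 : n x u * |pderiv2 i (fun y => c y u) x|
            ≤ n x u * ‖gradient (fun y => c y u) x‖ :=
          mul_le_mul_of_nonneg_left g2 (hposu x).le
        linarith [g1.trans k1, h4.trans k2]
      calc |V i x * lweight x| = |V i x| * lweight x := by
            rw [abs_mul, abs_of_nonneg (lweight_nonneg x)]
        _ ≤ (2 * (B5 * (1+‖x‖) ^ (-5:ℝ))) * ((1+‖x‖) ^ (2:ℝ)) :=
            mul_le_mul hVb (lweight_le x) (lweight_nonneg x) (by positivity)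
        _ = (2*B5) * ((1+‖x‖) ^ (-5:ℝ) * (1+‖x‖) ^ (2:ℝ)) := by ring
        _ = (2*B5) * (1+‖x‖) ^ (-3:ℝ) := by rw [hrp]
    -- divergence identity
    have hdiv_eq : (fun x : E2 => pderiv2 0 (fun y => V 0 y * lweight y) x
          + pderiv2 1 (fun y => V 1 y * lweight y) x)
        = fun x : E2 => deriv (n x) u * lweight x + n x u *
            @inner ℝ _ _ (gradient (fun y => Real.log (n y u) - c y u) x) (gphi x) := by
      funext x
      rw [hB 0 x, hB 1 x, hA x, pderiv2_lweight, pderiv2_lweight, ← hI2 x]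
      ring
    -- integrability of both pieces
    have hI1int : Integrable (fun x : E2 => deriv (n x) u * lweight x) := by
      apply Integrable.mono' hint53
        (((hderivCont u hu).mul contDiff_lweight.continuous).aestronglyMeasurable)
      apply Filter.Eventually.of_forall
      intro x
      rw [Real.norm_eq_abs, Pi.mul_apply, abs_mul, abs_of_nonneg (lweight_nonneg x)]
      calc |deriv (n x) u| * lweight x
          ≤ (B5 * (1+‖x‖) ^ (-5:ℝ)) * ((1+‖x‖) ^ (2:ℝ)) :=
            mul_le_mul (key5 x u huI).2.2.1 (lweight_le x) (lweight_nonneg x) (by positivity)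
        _ = B5 * (1+‖x‖) ^ (-3:ℝ) := by rw [mul_assoc, hrp]
    have hgwn : ∀ x : E2, |@inner ℝ _ _ (gradient (fun y => Real.log (n y u) - c y u) x)
        (gphi x)| ≤ ‖gradient (fun y => Real.log (n y u) - c y u) x‖ := by
      intro x
      refine le_trans (abs_real_inner_le_norm _ _) ?_
      exact mul_le_of_le_one_right (norm_nonneg _) (norm_gphi_le x)
    have hI2int : Integrable (fun x : E2 => n x u *
        @inner ℝ _ _ (gradient (fun y => Real.log (n y u) - c y u) x) (gphi x)) := by
      apply Integrable.mono' hint3'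
      · exact (hnsu.continuous.mul ((continuous_gradient_of_contDiff
          (hls u huI)).inner continuous_gphi)).aestronglyMeasurable
      · apply Filter.Eventually.of_forall
        intro x
        rw [Real.norm_eq_abs, abs_mul, abs_of_pos (hposu x)]
        calc n x u * |@inner ℝ _ _ (gradient (fun y => Real.log (n y u) - c y u) x) (gphi x)|
            ≤ n x u * ‖gradient (fun y => Real.log (n y u) - c y u) x‖ :=
              mul_le_mul_of_nonneg_left (hgwn x) (hposu x).le
          _ ≤ 2 * (B3 * (1+‖x‖) ^ (-3:ℝ)) := (key3 x u huI).2.2.2.2.2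
    -- apply the divergence theorem
    have hzero := div_eq_zero (fun y => V 0 y * lweight y) (fun y => V 1 y * lweight y)
      ((hVsm 0).mul contDiff_lweight) ((hVsm 1).mul contDiff_lweight) (2*B5)
      (fun x => hwdec 0 x) (fun x => hwdec 1 x)
      (by rw [show (fun x : E2 => pderiv2 0 (fun y => V 0 y * lweight y) x
            + pderiv2 1 (fun y => V 1 y * lweight y) x) = _ from hdiv_eq]
          exact hI1int.add hI2int)
    rw [show (fun x : E2 => pderiv2 0 (fun y => V 0 y * lweight y) x
        + pderiv2 1 (fun y => V 1 y * lweight y) x) = _ from hdiv_eq] at hzero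
    rw [integral_add hI1int hI2int] at hzero
    -- conclude with Cauchy-Schwarz and Young
    have hneg : (∫ x, deriv (n x) u * lweight x) = - ∫ x, n x u *
        @inner ℝ _ _ (gradient (fun y => Real.log (n y u) - c y u) x) (gphi x) := by
      linarith
    rw [hneg, ← integral_neg]
    have hmono : (∫ x, -(n x u *
        @inner ℝ _ _ (gradient (fun y => Real.log (n y u) - c y u) x) (gphi x)))
        ≤ ∫ x, (1/(2*δ) * n x u + δ/2 *
          (n x u * ‖gradient (fun y => Real.log (n y u) - c y u) x‖ ^ 2)) := by
      apply integral_mono hI2int.neg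
        (((hInt_n u huI).const_mul (1/(2*δ))).add ((hInt_q u huI).const_mul (δ/2)))
      intro x
      have h1 : -(n x u * @inner ℝ _ _ (gradient (fun y => Real.log (n y u) - c y u) x)
          (gphi x)) ≤ n x u * ‖gradient (fun y => Real.log (n y u) - c y u) x‖ := by
        have hip := hgwn x
        have hneg' : -(@inner ℝ _ _ (gradient (fun y => Real.log (n y u) - c y u) x)
            (gphi x)) ≤ ‖gradient (fun y => Real.log (n y u) - c y u) x‖ := by
          have := (abs_le.1 hip).1
          linarith
        calc -(n x u * @inner ℝ _ _ (gradient (fun y => Real.log (n y u) - c y u) x)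
              (gphi x))
            = n x u * (-(@inner ℝ _ _ (gradient (fun y => Real.log (n y u) - c y u) x)
              (gphi x))) := by ring
          _ ≤ n x u * ‖gradient (fun y => Real.log (n y u) - c y u) x‖ :=
              mul_le_mul_of_nonneg_left hneg' (hposu x).le
      have hy : ‖gradient (fun y => Real.log (n y u) - c y u) x‖
          ≤ 1/(2*δ) + δ/2 * ‖gradient (fun y => Real.log (n y u) - c y u) x‖ ^ 2 := by
        have h2d : (0:ℝ) < 2*δ := by linarith
        have hkey : 2*δ*‖gradient (fun y => Real.log (n y u) - c y u) x‖
            ≤ 1 + δ^2*‖gradient (fun y => Real.log (n y u) - c y u) x‖^2 := by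
          nlinarith [sq_nonneg (δ * ‖gradient (fun y => Real.log (n y u) - c y u) x‖ - 1)]
        calc ‖gradient (fun y => Real.log (n y u) - c y u) x‖
            ≤ (1 + δ^2*‖gradient (fun y => Real.log (n y u) - c y u) x‖^2)/(2*δ) :=
              (le_div_iff₀ h2d).2 (by linarith)
          _ = 1/(2*δ) + δ/2 * ‖gradient (fun y => Real.log (n y u) - c y u) x‖ ^ 2 := by
              field_simp
      have h2 : n x u * ‖gradient (fun y => Real.log (n y u) - c y u) x‖
          ≤ 1/(2*δ) * n x u + δ/2 *
            (n x u * ‖gradient (fun y => Real.log (n y u) - c y u) x‖ ^ 2) := by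
        calc n x u * ‖gradient (fun y => Real.log (n y u) - c y u) x‖
            ≤ n x u * (1/(2*δ) + δ/2 *
              ‖gradient (fun y => Real.log (n y u) - c y u) x‖ ^ 2) :=
              mul_le_mul_of_nonneg_left hy (hposu x).le
          _ = 1/(2*δ) * n x u + δ/2 *
              (n x u * ‖gradient (fun y => Real.log (n y u) - c y u) x‖ ^ 2) := by ring
      simp only [Pi.neg_apply, Pi.add_apply]
      linarith
    calc (∫ x, -(n x u *
          @inner ℝ _ _ (gradient (fun y => Real.log (n y u) - c y u) x) (gphi x)))
        ≤ ∫ x, (1/(2*δ) * n x u + δ/2 *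
          (n x u * ‖gradient (fun y => Real.log (n y u) - c y u) x‖ ^ 2)) := hmono
      _ = 1/(2*δ) * (∫ x, n x u) + δ/2 *
          ∫ x, n x u * ‖gradient (fun y => Real.log (n y u) - c y u) x‖ ^ 2 := by
          rw [integral_add ((hInt_n u huI).const_mul _) ((hInt_q u huI).const_mul _),
            integral_const_mul, integral_const_mul]
      _ = M / (2*δ) + δ/2 *
          ∫ x, n x u * ‖gradient (fun y => Real.log (n y u) - c y u) x‖ ^ 2 := by
          rw [hmass u huI]; ring
  -- monotonicity
  have hreal : (∫ x, n x t * lweight x) ≤ (∫ x, n x 0 * lweight x) + (M / (2*δ) * t +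
      δ/2 * ∫ s in Ioc (0:ℝ) t,
        ∫ x, n x s * ‖gradient (fun y => Real.log (n y s) - c y s) x‖ ^ 2) := by
    have hG : AntitoneOn (fun r => (∫ x, n x r * lweight x) - (M / (2*δ) * r +
        δ/2 * ∫ s in Ioc (0:ℝ) r,
          ∫ x, n x s * ‖gradient (fun y => Real.log (n y s) - c y s) x‖ ^ 2))
        (Icc (0:ℝ) T) := by
      have hHd : ∀ u ∈ Ioo (0:ℝ) T, HasDerivAt (fun r => (∫ x, n x r * lweight x) -
          (M / (2*δ) * r + δ/2 * ∫ s in Ioc (0:ℝ) r,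
            ∫ x, n x s * ‖gradient (fun y => Real.log (n y s) - c y s) x‖ ^ 2))
          ((∫ x, deriv (n x) u * lweight x) - (M / (2*δ) +
            δ/2 * ∫ x, n x u * ‖gradient (fun y => Real.log (n y u) - c y u) x‖ ^ 2)) u := by
        intro u hu
        have hlin : HasDerivAt (fun r : ℝ => M / (2*δ) * r) (M / (2*δ)) u := by
          simpa using (hasDerivAt_id u).const_mul (M / (2*δ))
        exact (hFd u hu).sub (hlin.add ((hPd u hu).const_mul (δ/2)))
      apply antitoneOn_of_deriv_nonpos (convex_Icc _ _)
      · apply ContinuousOn.sub hFc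
        apply ContinuousOn.add (continuousOn_const.mul continuousOn_id)
        exact continuousOn_const.mul hPc
      · rw [interior_Icc]
        intro u hu
        exact ((hHd u hu).differentiableAt).differentiableWithinAt
      · rw [interior_Icc]
        intro u hu
        rw [(hHd u hu).deriv]
        have := hIBP u hu
        linarith
    have := hG hT0 ht ht.1
    simp only [Ioc_self, Measure.restrict_empty] at this
    simp only [integral_zero_measure] at this
    have hP0 : (∫ s in Ioc (0:ℝ) (0:ℝ),
        ∫ x, n x s * ‖gradient (fun y => Real.log (n y s) - c y s) x‖ ^ 2) = 0 := by
      simp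
    linarith [this]
  -- final ENNReal assembly
  have hsub : Ioc (0:ℝ) t ⊆ Icc (0:ℝ) T := fun s hs => ⟨hs.1.le, hs.2.trans ht.2⟩
  have hQ : (∫⁻ s in Ioc (0:ℝ) t, ∫⁻ x, ENNReal.ofReal
        (n x s * ‖gradient (fun y => Real.log (n y s) - c y s) x‖ ^ 2)) =
      ENNReal.ofReal (∫ s in Ioc (0:ℝ) t,
        ∫ x, n x s * ‖gradient (fun y => Real.log (n y s) - c y s) x‖ ^ 2) := by
    rw [setLIntegral_congr_fun_ae measurableSet_Ioc (Filter.Eventually.of_forall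
      (fun s hs => (ofReal_integral_eq_lintegral_ofReal (hInt_q s (hsub hs))
        (Filter.Eventually.of_forall (fun x => mul_nonneg (hnpos x s (hsub hs)).le
          (pow_nonneg (norm_nonneg _) 2)))).symm))]
    rw [← ofReal_integral_eq_lintegral_ofReal (hDIcc.mono_set hsub)
      ((ae_restrict_iff' measurableSet_Ioc).2 (Filter.Eventually.of_forall
        (fun s hs => hD0 s (hsub hs))))]
  have hL0 : (∫⁻ x, ENNReal.ofReal (n x 0 * Real.log (1 + ‖x‖ ^ 2))) =
      ENNReal.ofReal (∫ x, n x 0 * lweight x) :=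
    (ofReal_integral_eq_lintegral_ofReal (hInt_f 0 hT0) (Filter.Eventually.of_forall
      (fun x => mul_nonneg (hnpos x 0 hT0).le (lweight_nonneg x)))).symm
  have hLt : (∫⁻ x, ENNReal.ofReal (n x t * Real.log (1 + ‖x‖ ^ 2))) =
      ENNReal.ofReal (∫ x, n x t * lweight x) :=
    (ofReal_integral_eq_lintegral_ofReal (hInt_f t ht) (Filter.Eventually.of_forall
      (fun x => mul_nonneg (hnpos x t ht).le (lweight_nonneg x)))).symm
  rw [hL0, hLt, hQ]
  calc ENNReal.ofReal (∫ x, n x t * lweight x)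
      ≤ ENNReal.ofReal ((∫ x, n x 0 * lweight x) + (M / (2*δ) * t +
        δ/2 * ∫ s in Ioc (0:ℝ) t,
          ∫ x, n x s * ‖gradient (fun y => Real.log (n y s) - c y s) x‖ ^ 2)) :=
        ENNReal.ofReal_le_ofReal hreal
    _ ≤ ENNReal.ofReal (∫ x, n x 0 * lweight x) + ENNReal.ofReal (M / (2*δ) * t +
        δ/2 * ∫ s in Ioc (0:ℝ) t,
          ∫ x, n x s * ‖gradient (fun y => Real.log (n y s) - c y s) x‖ ^ 2) :=
        ENNReal.ofReal_add_le
    _ ≤ ENNReal.ofReal (∫ x, n x 0 * lweight x) + (ENNReal.ofReal (M / (2*δ) * t) +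
        ENNReal.ofReal (δ/2 * ∫ s in Ioc (0:ℝ) t,
          ∫ x, n x s * ‖gradient (fun y => Real.log (n y s) - c y s) x‖ ^ 2)) :=
        add_le_add le_rfl ENNReal.ofReal_add_le
    _ = ENNReal.ofReal (∫ x, n x 0 * lweight x) + ENNReal.ofReal (M / (2*δ) * t) +
        ENNReal.ofReal (δ/2) * ENNReal.ofReal (∫ s in Ioc (0:ℝ) t,
          ∫ x, n x s * ‖gradient (fun y => Real.log (n y s) - c y s) x‖ ^ 2) := by
        rw [ENNReal.ofReal_mul (by linarith : (0:ℝ) ≤ δ/2), add_assoc]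
end
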